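/- arXiv:1308.4291 — 5 statements merged into one kernel-verified Lean document; each statement's English description precedes it below -/
import Mathlib

section
/- Let G be a series-parallel graph (i.e., containing no subdivision of K4) with a planar embedding, let v be a cut-vertex of G, and let e1=(u,v) and e2=(w,v) be two edges consecutive in the cyclic order around v such that e1 belongs to a block b1 of G and e2 belongs to a different block b2. Then the graph G* obtained from G by adding a new vertex z together with edges (u,z) and (w,z) is still series-parallel (contains no K4-subdivision), and G* has exactly one fewer block than G. -/
/-- `G` contains a subdivision of `K₄`: four distinct branch vertices pairwise joined
by paths which share only the appropriate branch vertices. -/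
def HasK4Subdivision {V : Type*} (G : SimpleGraph V) : Prop :=
  ∃ f : Fin 4 → V, Function.Injective f ∧
    ∃ w : ∀ i j : Fin 4, G.Walk (f i) (f j),
      (∀ i j : Fin 4, i ≠ j → (w i j).IsPath) ∧
      (∀ i j k l : Fin 4, i ≠ j → k ≠ l → ({i, j} : Set (Fin 4)) ≠ {k, l} →
        ∀ x : V, x ∈ (w i j).support → x ∈ (w k l).support →
          x ∈ f '' (({i, j} : Set (Fin 4)) ∩ {k, l}))

/-- A nonempty set of vertices inducing a connected subgraph with no cut-vertex
(single edges and single vertices allowed). -/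
def TwoConnSet {V : Type*} (G : SimpleGraph V) (B : Set V) : Prop :=
  B.Nonempty ∧ (G.induce B).Connected ∧
    ∀ v ∈ B, B = {v} ∨ (G.induce (B \ {v})).Connected

/-- A block of `G`: a maximal set of vertices inducing a connected subgraph without
cut-vertices. -/
def IsBlock {V : Type*} (G : SimpleGraph V) (B : Set V) : Prop :=
  TwoConnSet G B ∧ ∀ C : Set V, B ⊆ C → TwoConnSet G C → C = B

/-- The number of blocks of `G`. -/
noncomputable def numBlocks {V : Type*} (G : SimpleGraph V) : ℕ :=
  Nat.card {B : Set V // IsBlock G B}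

/-- A cut-vertex: removing it increases the number of connected components. -/
def IsCutVertex {V : Type*} (G : SimpleGraph V) (v : V) : Prop :=
  Nat.card G.ConnectedComponent <
    Nat.card (G.induce ({v}ᶜ : Set V)).ConnectedComponent

/-- The graph obtained from `G` by adding a new vertex `z` (the `none` vertex)
together with the two edges `(u,z)` and `(w,z)`. -/
def addVertexTwoEdges {V : Type*} (G : SimpleGraph V) (u w : V) :
    SimpleGraph (Option V) :=
  SimpleGraph.fromRel (fun a b =>
    (∃ x y : V, a = some x ∧ b = some y ∧ G.Adj x y) ∨
      (a = none ∧ (b = some u ∨ b = some w)))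

/-! Every `u`–`w` path of `G` passes through `v`: otherwise, closed up by the edge `wv`, it
would be an ear of `b1` ending at `w ∉ b1`. So in `G* = G + z` the new vertex `z` and `v`
separate `u` from `w`.

Blocks: `b1 ∪ b2 ∪ {z}` is 2-connected (an ear `u z w v` glues `b1` to `b2`) and maximal. If a
larger 2-connected set existed, folding `z` onto `v` would leave `v` as its only cut-vertex,
and each component at `v` (containing `u` or `w`) would already lie in `b1` or `b2`. Every other
block of `G*` is a block of `G` other than `b1, b2`, so exactly one block is lost.

No `K₄`: a branch vertex has three neighbours, so `z` is an interior vertex of one branch path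
`W i j`. The two other routes from `f i` to `f j` meet only at branch vertices, so one of them
avoids `v`; if `W i j` avoided `v` too, this would give a `u`–`w` path avoiding `v`. Hence
`W i j` passes through `v`, and folding `z` onto `v` and shortcutting the branch paths yields
a subdivision of `K₄` in `G`. -/

open SimpleGraph Set Function

section InducedConnectivity

variable {V V' : Type*} {G : SimpleGraph V}

theorem connected_induce_iff_exists_walk {S : Set V} :
    (G.induce S).Connected ↔
      S.Nonempty ∧ ∀ x ∈ S, ∀ y ∈ S, ∃ p : G.Walk x y, ∀ z ∈ p.support, z ∈ S := by
  constructor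
  · intro h
    obtain ⟨⟨a, ha⟩⟩ := h.nonempty
    refine ⟨⟨a, ha⟩, fun x hx y hy => ?_⟩
    obtain ⟨p⟩ := h.preconnected ⟨x, hx⟩ ⟨y, hy⟩
    refine ⟨p.map (Embedding.induce S).toHom, fun z hz => ?_⟩
    obtain ⟨t, -, rfl⟩ := List.mem_map.1 ((p.support_map _) ▸ hz)
    exact t.2
  · rintro ⟨⟨a, ha⟩, h⟩
    refine (connected_iff_exists_forall_reachable _).2 ⟨⟨a, ha⟩, fun ⟨y, hy⟩ => ?_⟩
    obtain ⟨p, hp⟩ := h a ha y hy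
    exact ⟨p.induce S hp⟩

theorem connected_induce_of_forall_exists_walk {S T : Set V} (hT : (G.induce T).Connected)
    (hTS : T ⊆ S) (h : ∀ x ∈ S, ∃ y ∈ T, ∃ p : G.Walk x y, ∀ z ∈ p.support, z ∈ S) :
    (G.induce S).Connected := by
  obtain ⟨hTne, hTwalk⟩ := connected_induce_iff_exists_walk.1 hT
  refine connected_induce_iff_exists_walk.2 ⟨hTne.mono hTS, fun x hx y hy => ?_⟩
  obtain ⟨x', hx', p, hp⟩ := h x hx
  obtain ⟨y', hy', q, hq⟩ := h y hy
  obtain ⟨r, hr⟩ := hTwalk x' hx' y' hy'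
  refine ⟨p.append (r.append q.reverse), fun z hz => ?_⟩
  simp only [Walk.mem_support_append_iff, Walk.support_reverse, List.mem_reverse] at hz
  rcases hz with hz | hz | hz
  exacts [hp z hz, hTS (hr z hz), hq z hz]

theorem connected_induce_singleton (x : V) : (G.induce {x}).Connected :=
  connected_induce_iff_exists_walk.2
    ⟨singleton_nonempty x, by rintro a rfl b rfl; exact ⟨Walk.nil, by simp⟩⟩

theorem connected_induce_image {G' : SimpleGraph V'} (φ : G →g G') {S : Set V}
    (hS : (G.induce S).Connected) : (G'.induce (φ '' S)).Connected := by
  obtain ⟨hne, hwalk⟩ := connected_induce_iff_exists_walk.1 hS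
  refine connected_induce_iff_exists_walk.2 ⟨hne.image φ, ?_⟩
  rintro _ ⟨x, hx, rfl⟩ _ ⟨y, hy, rfl⟩
  obtain ⟨p, hp⟩ := hwalk x hx y hy
  refine ⟨p.map φ, fun z hz => ?_⟩
  obtain ⟨t, ht, rfl⟩ := List.mem_map.1 ((p.support_map φ) ▸ hz)
  exact mem_image_of_mem φ (hp t ht)

theorem connected_induce_image_iff {G' : SimpleGraph V'} (f : G ↪g G') {S : Set V} :
    (G'.induce (f '' S)).Connected ↔ (G.induce S).Connected :=
  Iso.connected_iff { Equiv.Set.image f S f.injective with map_rel_iff' := by simp } |>.symm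

theorem exists_adj_walk_of_connected_induce {S : Set V} (hS : (G.induce S).Connected)
    {x z : V} (hx : x ∈ S) (hz : z ∈ S) (hxz : x ≠ z) :
    ∃ s, G.Adj s z ∧ ∃ p : G.Walk x s, ∀ y ∈ p.support, y ∈ S \ {z} := by
  classical
  obtain ⟨p, hp⟩ := (connected_induce_iff_exists_walk.1 hS).2 z hz x hx
  have hnil : ¬p.bypass.Nil := Walk.not_nil_of_ne hxz.symm
  have hsupp := p.bypass.cons_support_tail hnil
  refine ⟨p.bypass.snd, (p.bypass.adj_snd hnil).symm, p.bypass.tail.reverse, fun y hy => ?_⟩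
  rw [Walk.support_reverse, List.mem_reverse] at hy
  refine ⟨hp y (p.support_bypass_subset_support (hsupp ▸ List.mem_cons_of_mem z hy)), ?_⟩
  rintro rfl
  exact (List.nodup_cons.1 (hsupp ▸ p.bypass_isPath.support_nodup)).1 hy

/-- The vertex set of the connected component of `t` in `G.induce T` (empty if `t ∉ T`). -/
def componentIn (G : SimpleGraph V) (T : Set V) (t : V) : Set V :=
  {y | ∃ p : G.Walk t y, ∀ z ∈ p.support, z ∈ T}

theorem componentIn_subset {T : Set V} {t : V} : componentIn G T t ⊆ T :=
  fun y ⟨p, hp⟩ => hp y p.end_mem_support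

theorem self_mem_componentIn {T : Set V} {t : V} (ht : t ∈ T) : t ∈ componentIn G T t :=
  ⟨Walk.nil, by simpa using ht⟩

theorem mem_componentIn_of_mem_support {T : Set V} {t y y' : V} (hy : y ∈ componentIn G T t)
    {q : G.Walk y y'} (hq : ∀ z ∈ q.support, z ∈ T) {z : V} (hz : z ∈ q.support) :
    z ∈ componentIn G T t := by
  classical
  obtain ⟨p, hp⟩ := hy
  refine ⟨p.append (q.takeUntil z hz), fun z' hz' => ?_⟩
  rcases (Walk.mem_support_append_iff _ _).1 hz' with h | h
  exacts [hp z' h, hq z' (q.support_takeUntil_subset_support hz h)]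

theorem connected_induce_componentIn {T : Set V} {t : V} (ht : t ∈ T) :
    (G.induce (componentIn G T t)).Connected := by
  refine connected_induce_of_forall_exists_walk (connected_induce_singleton t)
    (singleton_subset_iff.2 (self_mem_componentIn ht))
    fun y ⟨p, hp⟩ => ⟨t, rfl, p.reverse, fun z hz => ?_⟩
  rw [Walk.support_reverse, List.mem_reverse] at hz
  exact mem_componentIn_of_mem_support (self_mem_componentIn ht) hp hz

end InducedConnectivity

theorem SimpleGraph.Walk.IsPath.eq_of_mem_takeUntil_of_mem_dropUntil {V : Type*}
    [DecidableEq V] {G : SimpleGraph V} {a b x y : V} {P : G.Walk a b} (hP : P.IsPath)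
    (hx : x ∈ P.support) (h1 : y ∈ (P.takeUntil x hx).support)
    (h2 : y ∈ (P.dropUntil x hx).support) : y = x := by
  by_contra hyx
  have hnd := hP.support_nodup
  rw [← P.take_spec hx, Walk.support_append] at hnd
  rw [← (P.dropUntil x hx).cons_tail_support] at h2
  exact List.disjoint_of_nodup_append hnd h1 ((List.mem_cons.1 h2).resolve_left hyx)

section Blocks

variable {V V' : Type*} {G : SimpleGraph V}

theorem TwoConnSet.connected_induce_diff_singleton {B : Set V} (hB : TwoConnSet G B) {a b : V}
    (ha : a ∈ B) (hb : b ∈ B) (hab : a ≠ b) (y : V) : (G.induce (B \ {y})).Connected := by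
  by_cases hy : y ∈ B
  · refine (hB.2.2 y hy).resolve_left fun h => hab ?_
    rw [h] at ha hb
    exact ha.trans hb.symm
  · rw [sdiff_singleton_eq_self hy]
    exact hB.2.1

theorem TwoConnSet.union {B C : Set V} (hB : TwoConnSet G B) (hC : TwoConnSet G C) {x y : V}
    (hx : x ∈ B ∩ C) (hy : y ∈ B ∩ C) (hxy : x ≠ y) : TwoConnSet G (B ∪ C) := by
  refine ⟨⟨x, Or.inl hx.1⟩, induce_union_connected hB.2.1.preconnected hC.2.1.preconnected
    ⟨x, hx⟩, fun t _ => Or.inr ?_⟩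
  rw [union_sdiff_distrib]
  refine induce_union_connected
    (hB.connected_induce_diff_singleton hx.1 hy.1 hxy t).preconnected
    (hC.connected_induce_diff_singleton hx.2 hy.2 hxy t).preconnected ?_
  by_cases hxt : x = t
  · exact ⟨y, ⟨hy.1, fun h => hxy (hxt.trans h.symm)⟩, hy.2, fun h => hxy (hxt.trans h.symm)⟩
  · exact ⟨x, ⟨hx.1, hxt⟩, hx.2, hxt⟩

theorem TwoConnSet.union_support_of_isPath {B : Set V} (hB : TwoConnSet G B) {a b : V}
    (ha : a ∈ B) (hb : b ∈ B) (hab : a ≠ b) {P : G.Walk a b} (hP : P.IsPath) :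
    TwoConnSet G (B ∪ {z | z ∈ P.support}) := by
  classical
  refine ⟨⟨a, Or.inl ha⟩, induce_union_connected hB.2.1.preconnected
    P.connected_induce_support.preconnected ⟨a, ha, P.start_mem_support⟩, fun t _ => Or.inr ?_⟩
  refine connected_induce_of_forall_exists_walk (hB.connected_induce_diff_singleton ha hb hab t)
    (sdiff_subset_sdiff_left subset_union_left) ?_
  rintro x ⟨hx | hx, hxt⟩
  · exact ⟨x, ⟨hx, hxt⟩, Walk.nil, by simpa using ⟨Or.inl hx, hxt⟩⟩
  have hxt' : ∀ {z}, z ∈ (P.takeUntil x hx).support → z ∈ (P.dropUntil x hx).support → z ≠ t :=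
    fun h1 h2 hzt => hxt (hzt ▸ hP.eq_of_mem_takeUntil_of_mem_dropUntil hx h1 h2).symm
  -- `x` reaches `a` or `b` along `P`, on the side of `x` that does not contain `t`
  by_cases htake : t ∈ (P.takeUntil x hx).support
  · refine ⟨b, ⟨hb, ?_⟩, P.dropUntil x hx, fun z hz =>
      ⟨Or.inr (P.support_dropUntil_subset_support hx hz), ?_⟩⟩
    · rintro rfl
      exact hxt' htake (P.dropUntil x hx).end_mem_support rfl
    · rintro rfl
      exact hxt' htake hz rfl
  · refine ⟨a, ⟨ha, fun hat => htake (hat ▸ (P.takeUntil x hx).start_mem_support)⟩,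
      (P.takeUntil x hx).reverse, fun z hz => ?_⟩
    rw [Walk.support_reverse, List.mem_reverse] at hz
    exact ⟨Or.inr (P.support_takeUntil_subset_support hx hz), fun hzt => htake (hzt ▸ hz)⟩

theorem TwoConnSet.image_iff {G' : SimpleGraph V'} (f : G ↪g G') {B : Set V} :
    TwoConnSet G' (f '' B) ↔ TwoConnSet G B := by
  have hsingleton (x : V) : f '' B = {f x} ↔ B = {x} := by
    rw [← image_singleton, (image_injective.2 f.injective).eq_iff]
  simp only [TwoConnSet, image_nonempty, forall_mem_image, hsingleton,
    connected_induce_image_iff]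
  refine and_congr_right' (and_congr_right' (forall₂_congr fun x _ => ?_))
  rw [← image_singleton, ← image_sdiff f.injective, connected_induce_image_iff]

theorem twoConnSet_insert_componentIn {S : Set V} {v t : V} (hS : (G.induce S).Connected)
    (hSx : ∀ x ∈ S, x ≠ v → (G.induce (S \ {x})).Connected) (hv : v ∈ S) (ht : t ∈ S)
    (htv : t ≠ v) : TwoConnSet G (insert v (componentIn G (S \ {v}) t)) := by
  set K := componentIn G (S \ {v}) t
  have hKconn : (G.induce K).Connected := connected_induce_componentIn ⟨ht, htv⟩
  refine ⟨⟨v, mem_insert v K⟩, ?_, ?_⟩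
  · obtain ⟨s, hsv, p, hp⟩ := exists_adj_walk_of_connected_induce hS ht hv htv
    refine connected_induce_of_forall_exists_walk hKconn (subset_insert v K) ?_
    rintro x (rfl | hx)
    · exact ⟨s, ⟨p, hp⟩, Walk.cons hsv.symm Walk.nil, by simpa using Or.inr ⟨p, hp⟩⟩
    · exact ⟨x, hx, Walk.nil, by simpa using Or.inr hx⟩
  rintro x (rfl | hxK) <;> right
  · rw [insert_sdiff_of_mem _ (mem_singleton x),
      sdiff_singleton_eq_self fun h => (componentIn_subset h).2 rfl]
    exact hKconn
  obtain ⟨hxS, hxv⟩ := componentIn_subset hxK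
  refine connected_induce_of_forall_exists_walk (connected_induce_singleton v)
    (singleton_subset_iff.2 ⟨mem_insert v K, Ne.symm hxv⟩) ?_
  rintro y ⟨rfl | hyK, hyx⟩
  · exact ⟨y, rfl, Walk.nil, by simpa using hyx⟩
  obtain ⟨hyS, hyv⟩ := componentIn_subset hyK
  obtain ⟨s, hsv, q, hq⟩ := exists_adj_walk_of_connected_induce (hSx x hxS hxv)
    ⟨hyS, hyx⟩ ⟨hv, Ne.symm hxv⟩ hyv
  refine ⟨v, rfl, q.concat hsv, fun z hz => ?_⟩
  rw [Walk.support_concat, List.mem_append, List.mem_singleton] at hz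
  rcases hz with hz | rfl
  · exact ⟨Or.inr (mem_componentIn_of_mem_support hyK
      (fun z hz => ⟨(hq z hz).1.1, (hq z hz).2⟩) hz), (hq z hz).1.2⟩
  · exact ⟨mem_insert z K, Ne.symm hxv⟩

theorem IsBlock.subset_of_twoConnSet {B C : Set V} (hB : IsBlock G B) (hC : TwoConnSet G C)
    {x y : V} (hx : x ∈ B ∩ C) (hy : y ∈ B ∩ C) (hxy : x ≠ y) : C ⊆ B := by
  rw [← hB.2 _ subset_union_left (hB.1.union hC hx hy hxy)]
  exact subset_union_right

theorem exists_isBlock_superset [Finite V] {B : Set V} (hB : TwoConnSet G B) :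
    ∃ D, IsBlock G D ∧ B ⊆ D := by
  obtain ⟨D, hD, hmax⟩ :=
    (toFinite {C | B ⊆ C ∧ TwoConnSet G C}).exists_maximal ⟨B, subset_rfl, hB⟩
  exact ⟨D, ⟨hD.2, fun C hC hCtc => (hmax ⟨hD.1.trans hC, hCtc⟩ hC).antisymm hC⟩, hD.1⟩

end Blocks

section K4

variable {V V' : Type*} {G : SimpleGraph V}

structure IsK4Subdivision (G : SimpleGraph V) (f : Fin 4 → V)
    (W : ∀ i j : Fin 4, G.Walk (f i) (f j)) : Prop where
  injective : Injective f
  isPath : ∀ i j, i ≠ j → (W i j).IsPath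
  mem_image_of_mem : ∀ i j k l : Fin 4, i ≠ j → k ≠ l → ({i, j} : Set (Fin 4)) ≠ {k, l} →
    ∀ x, x ∈ (W i j).support → x ∈ (W k l).support → x ∈ f '' (({i, j} : Set (Fin 4)) ∩ {k, l})

theorem hasK4Subdivision_iff : HasK4Subdivision G ↔ ∃ f W, IsK4Subdivision G f W :=
  ⟨fun ⟨f, hf, W, hW, hd⟩ => ⟨f, W, hf, hW, hd⟩, fun ⟨f, W, hf, hW, hd⟩ => ⟨f, hf, W, hW, hd⟩⟩

namespace IsK4Subdivision

variable {f : Fin 4 → V} {W : ∀ i j : Fin 4, G.Walk (f i) (f j)}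

theorem snd_injOn (hK : IsK4Subdivision G f W) (i : Fin 4) :
    InjOn (fun j => (W i j).snd) {j | j ≠ i} := by
  intro j hj k hk (hjk : (W i j).snd = (W i k).snd)
  by_contra hne
  have hpair : ({i, j} : Set (Fin 4)) ≠ {i, k} := by
    simp only [ne_eq, pair_eq_pair_iff]
    omega
  obtain ⟨t, ht, hft⟩ := hK.mem_image_of_mem i j i k (Ne.symm hj) (Ne.symm hk) hpair
    (W i j).snd ((W i j).getVert_mem_support 1) (hjk ▸ (W i k).getVert_mem_support 1)
  have hti : t = i := by
    simp only [mem_inter_iff, mem_insert_iff, mem_singleton_iff] at ht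
    omega
  have hadj := (W i j).adj_snd (Walk.not_nil_of_ne (hK.injective.ne (Ne.symm hj)))
  exact hadj.ne (hti ▸ hft)

theorem neighborSet_not_subset_pair (hK : IsK4Subdivision G f W) (i : Fin 4) (a b : V) :
    ¬G.neighborSet (f i) ⊆ {a, b} := by
  classical
  intro hsub
  have hmaps : MapsTo (fun j => (W i j).snd) (Finset.univ.erase i : Finset (Fin 4))
      ({a, b} : Finset V) := fun j hj => by
    have hji : j ≠ i := Finset.ne_of_mem_erase hj
    simpa using hsub ((W i j).adj_snd (Walk.not_nil_of_ne (hK.injective.ne (Ne.symm hji))))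
  have hcard := Finset.card_le_card_of_injOn _ hmaps
    fun j hj k hk => hK.snd_injOn i (Finset.ne_of_mem_erase hj) (Finset.ne_of_mem_erase hk)
  have := Finset.card_le_two (a := a) (b := b)
  simp only [Finset.mem_univ, Finset.card_erase_of_mem, Finset.card_univ, Fintype.card_fin]
    at hcard
  omega

theorem hasK4Subdivision_of_injective (hK : IsK4Subdivision G f W) {H : SimpleGraph V'}
    {σ : V' → V} (hσ : Injective σ) {g : Fin 4 → V'} (hg : ∀ i, σ (g i) = f i)
    (Q : ∀ i j, H.Walk (g i) (g j)) (hQ : ∀ i j, (Q i j).IsPath)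
    (hQW : ∀ i j, i ≠ j → ∀ z ∈ (Q i j).support, σ z ∈ (W i j).support) :
    HasK4Subdivision H := by
  refine ⟨g, fun i j hij => hK.injective (by rw [← hg, ← hg, hij]), Q, fun i j _ => hQ i j,
    fun i j k l hij hkl hne x hx1 hx2 => ?_⟩
  obtain ⟨t, ht, hft⟩ := hK.mem_image_of_mem i j k l hij hkl hne _ (hQW i j hij x hx1)
    (hQW k l hkl x hx2)
  exact ⟨t, ht, hσ (by rw [hg, hft])⟩

end IsK4Subdivision

end K4

section AddVertex

variable {V : Type*} {G : SimpleGraph V} {u v w : V}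

@[simp]
theorem addVertexTwoEdges_adj_some_some {a b : V} :
    (addVertexTwoEdges G u w).Adj (some a) (some b) ↔ G.Adj a b := by
  simpa [addVertexTwoEdges, adj_comm G b a] using Adj.ne

@[simp]
theorem addVertexTwoEdges_adj_none_left {o : Option V} :
    (addVertexTwoEdges G u w).Adj none o ↔ o = some u ∨ o = some w := by
  simp only [addVertexTwoEdges, fromRel_adj]
  aesop

@[simp]
theorem addVertexTwoEdges_adj_none_right {o : Option V} :
    (addVertexTwoEdges G u w).Adj o none ↔ o = some u ∨ o = some w := by
  rw [adj_comm, addVertexTwoEdges_adj_none_left]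

theorem image_some_preimage_of_none_notMem {C : Set (Option V)} (hn : none ∉ C) :
    some '' (some ⁻¹' C) = C :=
  image_preimage_eq_of_subset fun o ho => by
    cases o
    exacts [absurd ho hn, ⟨_, rfl⟩]

namespace addVertexTwoEdges

def embedding (G : SimpleGraph V) (u w : V) : G ↪g addVertexTwoEdges G u w :=
  ⟨⟨some, Option.some_injective V⟩, addVertexTwoEdges_adj_some_some⟩

theorem twoConnSet_image_some_iff {B : Set V} :
    TwoConnSet (addVertexTwoEdges G u w) (some '' B) ↔ TwoConnSet G B :=
  TwoConnSet.image_iff (embedding G u w)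

def retraction (hu : G.Adj u v) (hw : G.Adj w v) : addVertexTwoEdges G u w →g G where
  toFun o := o.getD v
  map_rel' := by
    rintro (_ | a) (_ | b) hab
    · exact absurd rfl hab.ne
    · rcases addVertexTwoEdges_adj_none_left.1 hab with h | h <;> cases h
      exacts [hu.symm, hw.symm]
    · rcases addVertexTwoEdges_adj_none_right.1 hab with h | h <;> cases h
      exacts [hu, hw]
    · exact addVertexTwoEdges_adj_some_some.1 hab

theorem mem_support_map_retraction {hu : G.Adj u v} {hw : G.Adj w v} {a b : Option V}
    {p : (addVertexTwoEdges G u w).Walk a b} {z : V} : z ∈ (p.map (retraction hu hw)).support ↔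
      some z ∈ p.support ∨ (z = v ∧ none ∈ p.support) := by
  rw [Walk.support_map, List.mem_map]
  constructor
  · rintro ⟨_ | t, ht, rfl⟩
    exacts [Or.inr ⟨rfl, ht⟩, Or.inl ht]
  · rintro (hz | ⟨rfl, hz⟩)
    exacts [⟨_, hz, rfl⟩, ⟨_, hz, rfl⟩]

theorem connected_induce_preimage_some (hu : G.Adj u v) (hw : G.Adj w v)
    {D : Set (Option V)} (hD : ((addVertexTwoEdges G u w).induce D).Connected)
    (hv : some v ∈ D) : (G.induce (some ⁻¹' D)).Connected := by
  have himage : retraction hu hw '' D = some ⁻¹' D := by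
    ext t
    refine ⟨?_, fun ht => ⟨some t, ht, rfl⟩⟩
    rintro ⟨_ | t', ho, rfl⟩
    exacts [hv, ho]
  exact himage ▸ connected_induce_image _ hD

theorem u_mem_or_w_mem_componentIn (hu : G.Adj u v) (hw : G.Adj w v)
    {D : Set (Option V)} (hD : ((addVertexTwoEdges G u w).induce D).Connected)
    (hn : none ∈ D) {t : V} (ht : some t ∈ D) :
    u ∈ componentIn G (some ⁻¹' D) t ∨ w ∈ componentIn G (some ⁻¹' D) t := by
  obtain ⟨s, hs, p, hp⟩ := exists_adj_walk_of_connected_induce hD ht hn (by simp)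
  have hq : ∀ z ∈ (p.map (retraction hu hw)).support, z ∈ some ⁻¹' D := fun z hz => by
    rcases mem_support_map_retraction.1 hz with hz | ⟨-, hn⟩
    exacts [(hp _ hz).1, absurd rfl (hp _ hn).2]
  rcases addVertexTwoEdges_adj_none_right.1 hs with rfl | rfl
  exacts [Or.inl ⟨_, hq⟩, Or.inr ⟨_, hq⟩]

end addVertexTwoEdges

end AddVertex

structure NeighborsInDistinctBlocks {V : Type*} (G : SimpleGraph V) (v u w : V)
    (b1 b2 : Set V) : Prop where
  adj_u : G.Adj u v
  adj_w : G.Adj w v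
  isBlock_b1 : IsBlock G b1
  isBlock_b2 : IsBlock G b2
  b1_ne_b2 : b1 ≠ b2
  u_mem : u ∈ b1
  v_mem_b1 : v ∈ b1
  w_mem : w ∈ b2
  v_mem_b2 : v ∈ b2

namespace NeighborsInDistinctBlocks

open addVertexTwoEdges

variable {V : Type*} {G : SimpleGraph V} {v u w : V} {b1 b2 : Set V}

theorem w_notMem_b1 (h : NeighborsInDistinctBlocks G v u w b1 b2) : w ∉ b1 := fun hw =>
  h.b1_ne_b2 (h.isBlock_b2.2 b1 (h.isBlock_b1.subset_of_twoConnSet h.isBlock_b2.1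
    ⟨hw, h.w_mem⟩ ⟨h.v_mem_b1, h.v_mem_b2⟩ h.adj_w.ne) h.isBlock_b1.1)

theorem u_notMem_b2 (h : NeighborsInDistinctBlocks G v u w b1 b2) : u ∉ b2 := fun hu =>
  h.b1_ne_b2 (h.isBlock_b1.2 b2 (h.isBlock_b2.subset_of_twoConnSet h.isBlock_b1.1
    ⟨hu, h.u_mem⟩ ⟨h.v_mem_b2, h.v_mem_b1⟩ h.adj_u.ne) h.isBlock_b2.1).symm

/-- A `u`–`w` path avoiding `v`, closed up by the edge `wv`, would be an ear of `b1`
through `w`. -/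
theorem v_mem_support (h : NeighborsInDistinctBlocks G v u w b1 b2) (p : G.Walk u w) :
    v ∈ p.support := by
  classical
  by_contra hv
  have hP : (p.bypass.concat h.adj_w).IsPath :=
    p.bypass_isPath.concat (fun hv' => hv (p.support_bypass_subset_support hv')) h.adj_w
  have hear := h.isBlock_b1.2 _ subset_union_left
    (h.isBlock_b1.1.union_support_of_isPath h.u_mem h.v_mem_b1 h.adj_u.ne hP)
  refine h.w_notMem_b1 (hear ▸ Or.inr ?_)
  simp [Walk.support_concat]

theorem not_adj (h : NeighborsInDistinctBlocks G v u w b1 b2) {a c : V} (ha : a ∈ b1)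
    (hav : a ≠ v) (hc : c ∈ b2) (hcv : c ≠ v) : ¬G.Adj a c := by
  intro hac
  obtain ⟨p, hp⟩ := (connected_induce_iff_exists_walk.1
    (h.isBlock_b1.1.connected_induce_diff_singleton h.u_mem h.v_mem_b1 h.adj_u.ne v)).2
    u ⟨h.u_mem, h.adj_u.ne⟩ a ⟨ha, hav⟩
  obtain ⟨q, hq⟩ := (connected_induce_iff_exists_walk.1
    (h.isBlock_b2.1.connected_induce_diff_singleton h.w_mem h.v_mem_b2 h.adj_w.ne v)).2
    c ⟨hc, hcv⟩ w ⟨h.w_mem, h.adj_w.ne⟩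
  have hv := h.v_mem_support (p.append (Walk.cons hac q))
  rw [Walk.mem_support_append_iff, Walk.support_cons, List.mem_cons] at hv
  rcases hv with hv | rfl | hv
  exacts [(hp v hv).2 rfl, hav rfl, (hq v hv).2 rfl]

theorem eq_or_eq_of_isBlock_subset (h : NeighborsInDistinctBlocks G v u w b1 b2) {B : Set V}
    (hB : IsBlock G B) (hsub : B ⊆ b1 ∪ b2) : B = b1 ∨ B = b2 := by
  by_contra! hne
  obtain ⟨x, hxB, hx1⟩ := not_subset.1 fun h1 => hne.1 (hB.2 b1 h1 h.isBlock_b1.1).symm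
  obtain ⟨y, hyB, hy2⟩ := not_subset.1 fun h2 => hne.2 (hB.2 b2 h2 h.isBlock_b2.1).symm
  have hy1 : y ∈ b1 := (hsub hyB).resolve_right hy2
  obtain ⟨p, hp⟩ := (connected_induce_iff_exists_walk.1 (hB.1.connected_induce_diff_singleton
    hxB hyB (fun hxy => hx1 (hxy ▸ hy1)) v)).2 y ⟨hyB, fun hyv => hy2 (hyv ▸ h.v_mem_b2)⟩ x
    ⟨hxB, fun hxv => hx1 (hxv ▸ h.v_mem_b1)⟩
  obtain ⟨d, hd, hd1, hd2⟩ := p.exists_boundary_dart b1 hy1 hx1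
  have hfst := hp _ (p.dart_fst_mem_support_of_mem_darts hd)
  have hsnd := hp _ (p.dart_snd_mem_support_of_mem_darts hd)
  exact h.not_adj hd1 hfst.2 ((hsub hsnd.1).resolve_left hd2) hsnd.2 d.adj

theorem mem_support_of_adj_none (h : NeighborsInDistinctBlocks G v u w b1 b2)
    {x y : Option V} (hx : (addVertexTwoEdges G u w).Adj none x)
    (hy : (addVertexTwoEdges G u w).Adj none y) (hxy : x ≠ y)
    (q : (addVertexTwoEdges G u w).Walk x y) : none ∈ q.support ∨ some v ∈ q.support := by
  have key (q : (addVertexTwoEdges G u w).Walk (some u) (some w)) :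
      none ∈ q.support ∨ some v ∈ q.support := by
    rcases mem_support_map_retraction.1 (h.v_mem_support (q.map (retraction h.adj_u h.adj_w)))
      with hv | ⟨-, hn⟩
    exacts [Or.inr hv, Or.inl hn]
  rw [addVertexTwoEdges_adj_none_left] at hx hy
  rcases hx with rfl | rfl <;> rcases hy with rfl | rfl
  · exact absurd rfl hxy
  · exact key q
  · simpa using key q.reverse
  · exact absurd rfl hxy

theorem twoConnSet_insert_none (h : NeighborsInDistinctBlocks G v u w b1 b2) :
    TwoConnSet (addVertexTwoEdges G u w) (insert none (some '' (b1 ∪ b2))) := by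
  have huw : u ≠ w := fun huw => h.u_notMem_b2 (huw ▸ h.w_mem)
  let ear : (addVertexTwoEdges G u w).Walk (some u) (some v) :=
    .cons (v := none) (by simp) (.cons (v := some w) (by simp)
      (.cons (by simpa using h.adj_w) .nil))
  have hear : ear.IsPath := by simp [ear, huw, h.adj_u.ne, h.adj_w.ne]
  have hB1 : TwoConnSet (addVertexTwoEdges G u w) (some '' b1) :=
    twoConnSet_image_some_iff.2 h.isBlock_b1.1
  have hB2 : TwoConnSet (addVertexTwoEdges G u w) (some '' b2) :=
    twoConnSet_image_some_iff.2 h.isBlock_b2.1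
  have hunion := (hB1.union_support_of_isPath ⟨u, h.u_mem, rfl⟩ ⟨v, h.v_mem_b1, rfl⟩
    (by simpa using h.adj_u.ne) hear).union hB2 (x := some w) (y := some v)
    ⟨Or.inr (show some w ∈ [some u, none, some w, some v] by simp), w, h.w_mem, rfl⟩
    ⟨Or.inl ⟨v, h.v_mem_b1, rfl⟩, v, h.v_mem_b2, rfl⟩ (by simpa using h.adj_w.ne)
  convert hunion using 1
  ext (_ | t)
  · simp [ear]
  simp only [mem_insert_iff, reduceCtorEq, mem_image, mem_union, Option.some.injEq,
    exists_eq_right, false_or, Walk.support_cons, Walk.support_nil, List.mem_cons,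
    List.not_mem_nil, or_false, mem_ofPred_eq, ear]
  constructor
  · tauto
  · rintro ((ht | rfl | rfl | rfl) | ht)
    exacts [Or.inl ht, Or.inl h.u_mem, Or.inr h.w_mem, Or.inl h.v_mem_b1, Or.inr ht]

/-- Folding `none` onto `v` turns a 2-connected `D ⊇ b1 ∪ b2 ∪ {none}` into a connected set
whose only possible cut-vertex is `v`; each of its pieces at `v` meets `u` or `w`, hence lies
in `b1` or `b2`. -/
theorem isBlock_insert_none (h : NeighborsInDistinctBlocks G v u w b1 b2) :
    IsBlock (addVertexTwoEdges G u w) (insert none (some '' (b1 ∪ b2))) := by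
  refine ⟨h.twoConnSet_insert_none, fun D hsub hD => subset_antisymm ?_ hsub⟩
  set A := some ⁻¹' D
  have hnone : none ∈ D := hsub (mem_insert _ _)
  have hvD : some v ∈ D := hsub (mem_insert_of_mem _ ⟨v, Or.inl h.v_mem_b1, rfl⟩)
  have hdiff (x : V) : ((addVertexTwoEdges G u w).induce (D \ {some x})).Connected :=
    hD.connected_induce_diff_singleton hnone hvD (Option.some_ne_none v).symm (some x)
  have hpre (x : V) : some ⁻¹' (D \ {some x}) = A \ {x} := by ext; simp [A]
  have hAx : ∀ x ∈ A, x ≠ v → (G.induce (A \ {x})).Connected := fun x _ hxv =>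
    hpre x ▸ connected_induce_preimage_some h.adj_u h.adj_w (hdiff x)
      ⟨hvD, by simpa using Ne.symm hxv⟩
  suffices hA : A ⊆ b1 ∪ b2 by
    rintro (_ | t) ho
    exacts [mem_insert _ _, mem_insert_of_mem _ ⟨t, hA ho, rfl⟩]
  intro t ht
  rcases eq_or_ne t v with rfl | htv
  · exact Or.inl h.v_mem_b1
  have hK := twoConnSet_insert_componentIn
    (connected_induce_preimage_some h.adj_u h.adj_w hD.2.1 hvD) hAx hvD ht htv
  have hmem {x : V} {b : Set V} (hb : IsBlock G b) (hx : x ∈ b) (hv : v ∈ b) (hxv : x ≠ v)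
      (hxK : x ∈ componentIn G (A \ {v}) t) : t ∈ b :=
    hb.subset_of_twoConnSet hK ⟨hx, mem_insert_of_mem _ hxK⟩ ⟨hv, mem_insert _ _⟩ hxv
      (mem_insert_of_mem _ (self_mem_componentIn ⟨ht, htv⟩))
  rcases u_mem_or_w_mem_componentIn h.adj_u h.adj_w (hdiff v) ⟨hnone, by simp⟩
    (t := t) ⟨ht, by simpa using htv⟩ with hu | hw
  · exact Or.inl (hmem h.isBlock_b1 h.u_mem h.v_mem_b1 h.adj_u.ne (hpre v ▸ hu))
  · exact Or.inr (hmem h.isBlock_b2 h.w_mem h.v_mem_b2 h.adj_w.ne (hpre v ▸ hw))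

theorem subset_insert_none (h : NeighborsInDistinctBlocks G v u w b1 b2)
    {C : Set (Option V)} (hC : TwoConnSet (addVertexTwoEdges G u w) C) (hn : none ∈ C) :
    C ⊆ insert none (some '' (b1 ∪ b2)) := by
  by_cases hC1 : C = {none}
  · exact hC1 ▸ singleton_subset_iff.2 (mem_insert _ _)
  obtain ⟨o, ho, hon⟩ : ∃ o ∈ C, o ≠ none := by
    by_contra! hall
    exact hC1 (eq_singleton_iff_unique_mem.2 ⟨hn, hall⟩)
  obtain ⟨s, hs, p, hp⟩ := exists_adj_walk_of_connected_induce hC.2.1 ho hn hon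
  have hsB : s ∈ insert none (some '' (b1 ∪ b2)) := by
    rcases addVertexTwoEdges_adj_none_right.1 hs with rfl | rfl
    exacts [mem_insert_of_mem _ ⟨u, Or.inl h.u_mem, rfl⟩,
      mem_insert_of_mem _ ⟨w, Or.inr h.w_mem, rfl⟩]
  exact h.isBlock_insert_none.subset_of_twoConnSet hC ⟨mem_insert _ _, hn⟩
    ⟨hsB, (hp s p.end_mem_support).1⟩ hs.ne.symm

theorem isBlock_image_some (h : NeighborsInDistinctBlocks G v u w b1 b2) {B : Set V}
    (hB : IsBlock G B) (h1 : B ≠ b1) (h2 : B ≠ b2) :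
    IsBlock (addVertexTwoEdges G u w) (some '' B) := by
  refine ⟨twoConnSet_image_some_iff.2 hB.1, fun C hsub hC => ?_⟩
  by_cases hn : none ∈ C
  · have hBsub : B ⊆ b1 ∪ b2 := fun t ht => by
      simpa using h.subset_insert_none hC hn (hsub ⟨t, ht, rfl⟩)
    rcases h.eq_or_eq_of_isBlock_subset hB hBsub with rfl | rfl
    exacts [absurd rfl h1, absurd rfl h2]
  · rw [← image_some_preimage_of_none_notMem hn] at hC ⊢
    rw [hB.2 _ (image_subset_iff.1 hsub) (twoConnSet_image_some_iff.1 hC)]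

theorem setOf_isBlock_addVertexTwoEdges [Finite V]
    (h : NeighborsInDistinctBlocks G v u w b1 b2) :
    {D | IsBlock (addVertexTwoEdges G u w) D} =
      insert (insert none (some '' (b1 ∪ b2)))
        ((some '' ·) '' ({B | IsBlock G B} \ {b1, b2})) := by
  ext D
  refine ⟨fun hD => ?_, ?_⟩
  · by_cases hn : none ∈ D
    · exact Or.inl (hD.2 _ (h.subset_insert_none hD.1 hn) h.isBlock_insert_none.1).symm
    have hDA := image_some_preimage_of_none_notMem hn
    obtain ⟨B, hB, hAB⟩ := exists_isBlock_superset
      (twoConnSet_image_some_iff.1 (by rw [hDA]; exact hD.1))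
    have hDB : some '' B = D :=
      hD.2 _ (hDA ▸ image_mono hAB) (twoConnSet_image_some_iff.2 hB.1)
    refine Or.inr ⟨B, ⟨hB, fun hB12 => hn ?_⟩, hDB⟩
    have hBsub : some '' B ⊆ insert none (some '' (b1 ∪ b2)) := by
      refine (image_mono ?_).trans (subset_insert _ _)
      rcases hB12 with rfl | rfl
      exacts [subset_union_left, subset_union_right]
    rw [← hD.2 _ (hDB ▸ hBsub) h.isBlock_insert_none.1]
    exact mem_insert _ _
  · rintro (rfl | ⟨B, ⟨hB, hB12⟩, rfl⟩)
    · exact h.isBlock_insert_none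
    · exact h.isBlock_image_some hB (fun h1 => hB12 (Or.inl h1)) (fun h2 => hB12 (Or.inr h2))

theorem numBlocks_addVertexTwoEdges [Finite V] (h : NeighborsInDistinctBlocks G v u w b1 b2) :
    numBlocks (addVertexTwoEdges G u w) = numBlocks G - 1 := by
  have hsub : {b1, b2} ⊆ {B | IsBlock G B} := by
    rintro _ (rfl | rfl)
    exacts [h.isBlock_b1, h.isBlock_b2]
  have hnew : insert none (some '' (b1 ∪ b2)) ∉
      (some '' ·) '' ({B | IsBlock G B} \ {b1, b2}) := by
    rintro ⟨B, -, hB⟩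
    have hn : none ∈ some '' B := by
      simp only at hB
      exact hB ▸ mem_insert _ _
    simp at hn
  have htwo := ncard_le_ncard hsub
  rw [ncard_pair h.b1_ne_b2] at htwo
  change Nat.card {D | IsBlock _ D} = Nat.card {B | IsBlock G B} - 1
  rw [Nat.card_coe_set_eq, Nat.card_coe_set_eq, h.setOf_isBlock_addVertexTwoEdges,
    ncard_insert_of_notMem hnew,
    ncard_image_of_injective _ (image_injective.2 (Option.some_injective V)),
    ncard_sdiff hsub, ncard_pair h.b1_ne_b2]
  omega

/-- The part of `P` through `none`, closed up by `R`, is a cycle through `none`, so it meets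
`some v`. -/
theorem some_mem_support_of_isPath (h : NeighborsInDistinctBlocks G v u w b1 b2)
    {a b : Option V} (ha : a ≠ none) (hb : b ≠ none) {P : (addVertexTwoEdges G u w).Walk a b}
    (hP : P.IsPath) (hn : none ∈ P.support) (R : (addVertexTwoEdges G u w).Walk a b)
    (hR : none ∉ R.support) : some v ∈ P.support ∨ some v ∈ R.support := by
  classical
  set p := (P.takeUntil none hn).reverse
  set q := P.dropUntil none hn
  have hp : ¬p.Nil := Walk.not_nil_of_ne ha.symm
  have hq : ¬q.Nil := Walk.not_nil_of_ne hb.symm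
  have hpsupp := p.cons_support_tail hp
  have hqsupp := q.cons_support_tail hq
  have hpP {z : Option V} (hz : z ∈ p.tail.support) : z ∈ P.support := by
    have : z ∈ p.support := hpsupp ▸ List.mem_cons_of_mem _ hz
    rw [Walk.support_reverse, List.mem_reverse] at this
    exact P.support_takeUntil_subset_support hn this
  have hqP {z : Option V} (hz : z ∈ q.tail.support) : z ∈ P.support :=
    P.support_dropUntil_subset_support hn (hqsupp ▸ List.mem_cons_of_mem _ hz)
  have hpn : none ∉ p.tail.support :=
    (List.nodup_cons.1 (hpsupp ▸ (hP.takeUntil hn).reverse.support_nodup)).1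
  have hqn : none ∉ q.tail.support :=
    (List.nodup_cons.1 (hqsupp ▸ (hP.dropUntil hn).support_nodup)).1
  have hne : p.snd ≠ q.snd := fun heq => by
    have hnd := hP.support_nodup
    rw [← P.take_spec hn, Walk.support_append] at hnd
    refine List.disjoint_of_nodup_append hnd ?_ (heq ▸ q.snd_mem_tail_support hq)
    have := p.getVert_mem_support 1
    rwa [Walk.support_reverse, List.mem_reverse] at this
  have hcycle := h.mem_support_of_adj_none (p.adj_snd hp) (q.adj_snd hq) hne
    (p.tail.append (R.append q.tail.reverse))
  simp only [Walk.mem_support_append_iff, Walk.support_reverse, List.mem_reverse] at hcycle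
  rcases hcycle with (hc | hc | hc) | (hc | hc | hc)
  exacts [absurd hc hpn, absurd hc hR, absurd hc hqn, Or.inl (hpP hc), Or.inr hc, Or.inl (hqP hc)]

/-- The routes from `f i` to `f j` through the two other branch vertices meet only in `f i` and
`f j`, so one of them avoids `some v` and closes up `W i j`. -/
theorem some_mem_support_of_none_mem (h : NeighborsInDistinctBlocks G v u w b1 b2)
    {f : Fin 4 → Option V} {W : ∀ i j, (addVertexTwoEdges G u w).Walk (f i) (f j)}
    (hK : IsK4Subdivision _ f W) (hf : ∀ i, f i ≠ none) {i j : Fin 4} (hij : i ≠ j)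
    (hn : none ∈ (W i j).support) : some v ∈ (W i j).support := by
  by_contra hv
  obtain ⟨m, n, hmn, hmi, hmj, hni, hnj⟩ := (by decide : ∀ i j : Fin 4, i ≠ j →
    ∃ m n : Fin 4, m ≠ n ∧ m ≠ i ∧ m ≠ j ∧ n ≠ i ∧ n ≠ j) i j hij
  have hnone (a b : Fin 4) (hab : a ≠ b) (hne : ({i, j} : Set (Fin 4)) ≠ {a, b}) :
      none ∉ (W a b).support := fun hn' => by
    obtain ⟨t, -, ht⟩ := hK.mem_image_of_mem i j a b hij hab hne none hn hn'
    exact hf t ht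
  have hroute (k : Fin 4) (hki : k ≠ i) (hkj : k ≠ j) :
      some v ∈ (W i k).support ∨ some v ∈ (W k j).support := by
    have := h.some_mem_support_of_isPath (hf i) (hf j) (hK.isPath i j hij) hn
      ((W i k).append (W k j)) (by
        rw [Walk.mem_support_append_iff]
        rintro (h1 | h2)
        · exact hnone i k (Ne.symm hki) (by simp only [ne_eq, pair_eq_pair_iff]; omega) h1
        · exact hnone k j hkj (by simp only [ne_eq, pair_eq_pair_iff]; omega) h2)
    rwa [or_iff_right hv, Walk.mem_support_append_iff] at this
  have hshared (a b c d : Fin 4) (hab : a ≠ b) (hcd : c ≠ d)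
      (hne : ({a, b} : Set (Fin 4)) ≠ {c, d})
      (hends : ∀ t ∈ ({a, b} ∩ {c, d} : Set (Fin 4)), t = i ∨ t = j)
      (h1 : some v ∈ (W a b).support) (h2 : some v ∈ (W c d).support) : False := by
    obtain ⟨t, ht, hft⟩ := hK.mem_image_of_mem a b c d hab hcd hne _ h1 h2
    rcases hends t ht with rfl | rfl
    exacts [hv (hft ▸ (W t j).start_mem_support), hv (hft ▸ (W i t).end_mem_support)]
  rcases hroute m hmi hmj with h1 | h1 <;> rcases hroute n hni hnj with h2 | h2 <;>
  · refine hshared _ _ _ _ (by omega) (by omega) (by simp only [ne_eq, pair_eq_pair_iff]; omega)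
      (fun t ht => ?_) h1 h2
    simp only [mem_inter_iff, mem_insert_iff, mem_singleton_iff] at ht
    omega

theorem not_hasK4Subdivision (h : NeighborsInDistinctBlocks G v u w b1 b2)
    (hG : ¬HasK4Subdivision G) : ¬HasK4Subdivision (addVertexTwoEdges G u w) := by
  classical
  rw [hasK4Subdivision_iff]
  rintro ⟨f, W, hK⟩
  have hf (i : Fin 4) : f i ≠ none := fun hi =>
    hK.neighborSet_not_subset_pair i (some u) (some w) (hi ▸ fun o ho => by simpa using ho)
  set φ := retraction h.adj_u h.adj_w
  refine hG (hK.hasK4Subdivision_of_injective (Option.some_injective V) (g := fun i => φ (f i))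
    (fun i => ?_) (fun i j => ((W i j).map φ).bypass) (fun i j => Walk.bypass_isPath _)
    fun i j hij z hz => ?_)
  · obtain ⟨x, hx⟩ := Option.ne_none_iff_exists'.1 (hf i)
    rw [hx]
    rfl
  · rcases mem_support_map_retraction.1 (Walk.support_bypass_subset_support _ hz) with
      hz | ⟨rfl, hn⟩
    exacts [hz, h.some_mem_support_of_none_mem hK hf hij hn]

end NeighborsInDistinctBlocks

theorem addVertex_seriesParallel_blocks_general
    {V : Type*} [Fintype V] (G : SimpleGraph V)
    (hSP : ¬HasK4Subdivision G)
    (v u w : V)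
    (hu : G.Adj u v) (hw : G.Adj w v)
    (b1 b2 : Set V) (hb1 : IsBlock G b1) (hb2 : IsBlock G b2) (hbne : b1 ≠ b2)
    (hub : u ∈ b1 ∧ v ∈ b1) (hwb : w ∈ b2 ∧ v ∈ b2) :
    ¬HasK4Subdivision (addVertexTwoEdges G u w) ∧
      numBlocks (addVertexTwoEdges G u w) = numBlocks G - 1 := by
  have h : NeighborsInDistinctBlocks G v u w b1 b2 :=
    ⟨hu, hw, hb1, hb2, hbne, hub.1, hub.2, hwb.1, hwb.2⟩
  exact ⟨h.not_hasK4Subdivision hSP, h.numBlocks_addVertexTwoEdges⟩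

/-- Adding a degree-2 vertex joined to two edges, consecutive around a cut-vertex `v`
and lying in distinct blocks, preserves series-parallelism (no `K₄`-subdivision) and
decreases the number of blocks by exactly one. -/
theorem addVertex_seriesParallel_blocks
    {V : Type*} [Fintype V] (G : SimpleGraph V)
    (hSP : ¬HasK4Subdivision G)
    (v u w : V) (hcut : IsCutVertex G v)
    (hu : G.Adj u v) (hw : G.Adj w v)
    -- `next` is the clockwise successor in the cyclic order of the neighbors of `v`
    -- in the planar embedding of `G`; the edges `(u,v)` and `(w,v)` are consecutive.
    (next : V → V) (hrot : ∀ x : V, G.Adj v x → G.Adj v (next x))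
    (hcons : next u = w)
    (b1 b2 : Set V) (hb1 : IsBlock G b1) (hb2 : IsBlock G b2) (hbne : b1 ≠ b2)
    (hub : u ∈ b1 ∧ v ∈ b1) (hwb : w ∈ b2 ∧ v ∈ b2) :
    ¬HasK4Subdivision (addVertexTwoEdges G u w) ∧
      numBlocks (addVertexTwoEdges G u w) = numBlocks G - 1 :=
  addVertex_seriesParallel_blocks_general G hSP v u w hu hw b1 b2 hb1 hb2 hbne hub hwb
end

section
/- Let O be an internally triangulated biconnected outerplane graph whose only two vertices of degree 2 are s and t. Then at least one of the two vertices adjacent to s on the outer cycle has degree exactly 3 in O. -/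
/-- `x` lies strictly inside the clockwise arc from `a` to `b` on the cycle `ZMod n`. -/
def StrictArc {n : ℕ} (a b x : ZMod n) : Prop :=
  0 < (x - a).val ∧ (x - a).val < (b - a).val

/-- Two chords `{a,b}` and `{c,d}` of the cycle on `ZMod n` cross (interleave). -/
def ChordsCross {n : ℕ} (a b c d : ZMod n) : Prop :=
  (StrictArc a b c ∧ StrictArc b a d) ∨ (StrictArc a b d ∧ StrictArc b a c)

/-!
A vertex `x` is located relative to a base point `u` by its position `(x - u).val`, and two
chords cross exactly when their end positions interleave. A noncrossing graph containing the
outer cycle has at most `2n - 3` edges: the edges inside an arc `[u, v]` split at the neighbour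
of `v` closest to `u`. So with exactly `2n - 3` edges, every chord that crosses no edge is
already present. Consequently every edge `uv` that is not a cycle edge has an apex `x` on its arc
adjacent to both ends, and the arc of such an edge contains a vertex of degree 2.

The neighbours `s ± 1` of `s` are therefore adjacent; let `x` be the apex of `s + 1, s - 1`. If
`x = s + 2` the vertex `s + 1` has degree 3, and if `x = s - 2` the vertex `s - 1` does.
Otherwise the arcs `s + 1 → x` and `x → s - 1` each contain a vertex of degree 2 other than `s`,
and these cannot both be `t`.
-/

open Finset

variable {n : ℕ}

instance (a b x : ZMod n) : Decidable (StrictArc a b x) := inferInstanceAs (Decidable (_ ∧ _))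

namespace ChordsCross

variable {a b c d : ZMod n}

theorem ne (h : ChordsCross a b c d) : c ≠ a := by
  rintro rfl
  rcases h with ⟨⟨h, -⟩, -⟩ | ⟨-, -, h⟩
  · simp at h
  · exact h.false

theorem swap_left (h : ChordsCross a b c d) : ChordsCross b a c d :=
  (h.imp And.symm And.symm).symm

end ChordsCross

namespace ZMod

theorem natCast_ne_zero_of_lt {k : ℕ} (hk : 0 < k) (hkn : k < n) : (k : ZMod n) ≠ 0 :=
  mt (natCast_eq_zero_iff k n).1 (Nat.not_dvd_of_pos_of_lt hk hkn)

theorem val_add_one_sub {u x : ZMod n} (h : (x - u).val + 1 < n) :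
    (x + 1 - u).val = (x - u).val + 1 := by
  have h1 : (1 : ZMod n).val = 1 := val_one'' (by omega)
  rw [add_sub_right_comm, val_add_of_lt (by rwa [h1]), h1]

variable [NeZero n]

theorem val_sub_sub_of_le {u x y : ZMod n} (h : (x - u).val ≤ (y - u).val) :
    (y - x).val = (y - u).val - (x - u).val := by
  rw [← val_sub h, sub_sub_sub_cancel_right]

theorem val_sub_of_lt {a b : ZMod n} (h : a.val < b.val) : (a - b).val = n + a.val - b.val := by
  have hba : (b - a).val = b.val - a.val := val_sub h.le
  rw [← neg_sub, neg_val, if_neg (by intro h0; rw [h0, val_zero] at hba; omega), hba]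
  have := b.val_lt
  omega

theorem val_sub_sub_of_lt {u x y : ZMod n} (h : (y - u).val < (x - u).val) :
    (y - x).val = n + (y - u).val - (x - u).val := by
  rw [← val_sub_of_lt h, sub_sub_sub_cancel_right]

theorem eq_of_val_sub_eq {u x y : ZMod n} (h : (x - u).val = (y - u).val) : x = y :=
  sub_left_injective (val_injective n h)

theorem add_val_sub (u x : ZMod n) : u + ((x - u).val : ZMod n) = x := by
  rw [natCast_zmod_val, add_sub_cancel]

theorem one_lt_val_sub {u v : ZMod n} (huv : u ≠ v) (hv : v ≠ u + 1) : 1 < (v - u).val := by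
  by_contra hk
  interval_cases h : (v - u).val
  · exact huv (sub_eq_zero.1 ((val_eq_zero _).1 h)).symm
  · exact hv (by rw [← add_val_sub u v, h, Nat.cast_one])

end ZMod

variable [NeZero n]

open ZMod

theorem strictArc_iff_of_le (u : ZMod n) {a b x : ZMod n} (h : (a - u).val ≤ (b - u).val) :
    StrictArc a b x ↔ (a - u).val < (x - u).val ∧ (x - u).val < (b - u).val := by
  unfold StrictArc
  rw [val_sub_sub_of_le h]
  rcases le_or_gt (a - u).val (x - u).val with hx | hx
  · rw [val_sub_sub_of_le hx]; omega
  · rw [val_sub_sub_of_lt hx]; have := (b - u).val_lt; omega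

theorem strictArc_iff_of_lt (u : ZMod n) {a b x : ZMod n} (h : (b - u).val < (a - u).val) :
    StrictArc a b x ↔ (a - u).val < (x - u).val ∨ (x - u).val < (b - u).val := by
  unfold StrictArc
  rw [val_sub_sub_of_lt h]
  have := (x - u).val_lt
  have := (a - u).val_lt
  rcases le_or_gt (a - u).val (x - u).val with hx | hx
  · rw [val_sub_sub_of_le hx]; omega
  · rw [val_sub_sub_of_lt hx]; omega

theorem StrictArc.ne_add_one {u v x : ZMod n} (h : StrictArc u v x) : x ≠ v + 1 := by
  rintro rfl
  obtain ⟨h0, h1⟩ := h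
  rw [add_sub_right_comm] at h0 h1
  have hle : (1 : ZMod n).val ≤ (v - u + 1).val := (val_one_eq_one_mod n ▸ Nat.mod_le 1 n).trans h0
  have := val_sub hle
  rw [add_sub_cancel_right] at this
  omega

theorem chordsCross_of_lt (u : ZMod n) {a b c d : ZMod n} (hac : (a - u).val < (c - u).val)
    (hcb : (c - u).val < (b - u).val) (hbd : (b - u).val < (d - u).val) : ChordsCross a b c d :=
  Or.inl ⟨(strictArc_iff_of_le u (by omega)).2 ⟨hac, hcb⟩,
    (strictArc_iff_of_lt u (by omega)).2 (Or.inl hbd)⟩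

theorem ChordsCross.symm {a b c d : ZMod n} (h : ChordsCross a b c d) : ChordsCross c d a b := by
  have ha : (a - a).val = 0 := by simp
  rcases h with ⟨⟨hc, hcb⟩, hd⟩ | ⟨⟨hd, hdb⟩, hc⟩
  · rw [strictArc_iff_of_lt a (by omega)] at hd
    exact Or.inr ⟨(strictArc_iff_of_le a (by omega)).2 (by omega),
      (strictArc_iff_of_lt a (by omega)).2 (by omega)⟩
  · rw [strictArc_iff_of_lt a (by omega)] at hc
    exact Or.inl ⟨(strictArc_iff_of_lt a (by omega)).2 (by omega),
      (strictArc_iff_of_le a (by omega)).2 (by omega)⟩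

namespace SimpleGraph

def IsNoncrossing (G : SimpleGraph (ZMod n)) : Prop :=
  ∀ ⦃a b c d : ZMod n⦄, G.Adj a b → G.Adj c d → ¬ChordsCross a b c d

variable {G : SimpleGraph (ZMod n)}

theorem IsNoncrossing.sup_edge (hG : G.IsNoncrossing) {p q : ZMod n}
    (h : ∀ ⦃c d⦄, G.Adj c d → ¬ChordsCross p q c d) : (G ⊔ edge p q).IsNoncrossing := by
  have key : ∀ ⦃c d⦄, (G ⊔ edge p q).Adj c d → ¬ChordsCross p q c d := by
    rintro c d (hcd | hcd) hx
    · exact h hcd hx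
    · rw [edge_adj] at hcd
      rcases hcd with ⟨⟨rfl, rfl⟩ | ⟨rfl, rfl⟩, -⟩
      · exact hx.ne rfl
      · exact hx.swap_left.ne rfl
  have key' : ∀ ⦃a b c d⦄, (edge p q).Adj a b → (G ⊔ edge p q).Adj c d →
      ¬ChordsCross a b c d := by
    rintro a b c d hab hcd hx
    rw [edge_adj] at hab
    rcases hab with ⟨⟨rfl, rfl⟩ | ⟨rfl, rfl⟩, -⟩
    · exact key hcd hx
    · exact key hcd hx.swap_left
  rintro a b c d (hab | hab) hcd hx
  · rcases hcd with hcd | hcd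
    · exact hG hab hcd hx
    · exact key' hcd (Or.inl hab) hx.symm
  · exact key' hab hcd hx

theorem IsNoncrossing.val_sub_mem_Icc (hG : G.IsNoncrossing) (u : ZMod n) {c d w y : ZMod n}
    (hcd : G.Adj c d) (hcw : (c - u).val < (w - u).val) (hwd : (w - u).val < (d - u).val)
    (hwy : G.Adj w y) : (y - u).val ∈ Set.Icc (c - u).val (d - u).val := by
  by_contra hy
  rcases not_and_or.1 hy with hy | hy
  · exact hG hwy.symm hcd (chordsCross_of_lt u (by omega) hcw hwd)
  · exact hG hcd hwy (chordsCross_of_lt u hcw hwd (by omega))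

variable [DecidableRel G.Adj]

variable (G) in
def edgesWithin (u : ZMod n) (k : ℕ) : Finset (ZMod n × ZMod n) :=
  univ.filter fun e => G.Adj e.1 e.2 ∧ (e.1 - u).val < (e.2 - u).val ∧ (e.2 - u).val ≤ k

theorem mem_edgesWithin {u x y : ZMod n} {k : ℕ} :
    (x, y) ∈ G.edgesWithin u k ↔ G.Adj x y ∧ (x - u).val < (y - u).val ∧ (y - u).val ≤ k := by
  simp [edgesWithin]

theorem IsNoncrossing.edgesWithin_subset (hG : G.IsNoncrossing) {u v z : ZMod n} {k : ℕ}
    (hv : (v - u).val = k) (hzv : G.Adj z v) (hz : (z - u).val < k)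
    (hmin : ∀ y, G.Adj y v → 0 < (y - u).val → (y - u).val < k → (z - u).val ≤ (y - u).val) :
    G.edgesWithin u k ⊆
      insert (u, v) (G.edgesWithin u (z - u).val ∪ G.edgesWithin z (k - (z - u).val)) := by
  rintro ⟨x, y⟩ hxy
  obtain ⟨hadj, hxy, hyk⟩ := mem_edgesWithin.1 hxy
  simp only [mem_insert, mem_union, mem_edgesWithin, Prod.mk.injEq]
  by_cases hym : (y - u).val ≤ (z - u).val
  · exact Or.inr (Or.inl ⟨hadj, hxy, hym⟩)
  by_cases hxm : (z - u).val ≤ (x - u).val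
  · rw [val_sub_sub_of_le hxm, val_sub_sub_of_le (hxm.trans hxy.le)]
    exact Or.inr (Or.inr ⟨hadj, by omega, by omega⟩)
  have hyv : y = v := by
    refine eq_of_val_sub_eq (u := u) (le_antisymm (hv ▸ hyk) ?_)
    by_contra hlt
    exact hG hadj hzv (chordsCross_of_lt u (by omega) (by omega) (by omega))
  subst hyv
  have hx0 : (x - u).val = 0 := by
    by_contra hx0
    exact hxm (hmin x hadj (Nat.pos_of_ne_zero hx0) (by omega))
  exact Or.inl ⟨eq_of_val_sub_eq (by rw [hx0, sub_self, val_zero]), rfl⟩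

theorem card_edgesWithin_le (hcyc : ∀ i : ZMod n, G.Adj i (i + 1)) (hG : G.IsNoncrossing)
    {k : ℕ} (hk : 1 ≤ k) (hkn : k < n) (u : ZMod n) : #(G.edgesWithin u k) ≤ 2 * k - 1 := by
  induction k using Nat.strong_induction_on generalizing u with
  | _ k ih =>
  obtain rfl | hk2 := hk.eq_or_lt
  · calc #(G.edgesWithin u 1) ≤ #{(u, u + 1)} := card_le_card ?_
      _ = 1 := card_singleton _
    rintro ⟨x, y⟩ hxy
    obtain ⟨-, hxy, hy⟩ := mem_edgesWithin.1 hxy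
    have hx : x = u := eq_of_val_sub_eq (u := u) (by rw [sub_self, val_zero]; omega)
    have hy : y = u + 1 := by rw [← add_val_sub u y, show (y - u).val = 1 by omega, Nat.cast_one]
    simp [hx, hy]
  set v := u + (k : ZMod n)
  have hv : (v - u).val = k := by simp [v, val_cast_of_lt hkn]
  have hZ : (univ.filter fun y => G.Adj y v ∧ 0 < (y - u).val ∧ (y - u).val < k).Nonempty := by
    refine ⟨v - 1, mem_filter.2 ⟨mem_univ _, by simpa using hcyc (v - 1), ?_⟩⟩
    have : v - 1 - u = ((k - 1 : ℕ) : ZMod n) := by push_cast [Nat.cast_sub hk, v]; ring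
    rw [this, val_cast_of_lt (by omega)]
    omega
  obtain ⟨z, hz, hmin⟩ := exists_min_image _ (fun y => (y - u).val) hZ
  obtain ⟨-, hzv, hz0, hzk⟩ := mem_filter.1 hz
  set m := (z - u).val
  have hsub := hG.edgesWithin_subset hv hzv hzk fun y hy h0 hk =>
    hmin y (mem_filter.2 ⟨mem_univ _, hy, h0, hk⟩)
  calc #(G.edgesWithin u k)
      ≤ #(insert (u, v) (G.edgesWithin u m ∪ G.edgesWithin z (k - m))) := card_le_card hsub
    _ ≤ #(G.edgesWithin u m) + #(G.edgesWithin z (k - m)) + 1 :=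
      (card_insert_le _ _).trans (by gcongr; exact card_union_le _ _)
    _ ≤ (2 * m - 1) + (2 * (k - m) - 1) + 1 := by
      gcongr
      exacts [ih m hzk hz0 (by omega) u, ih (k - m) (by omega) (by omega) (by omega) z]
    _ = 2 * k - 1 := by omega

theorem card_edgeFinset_le (hcyc : ∀ i : ZMod n, G.Adj i (i + 1)) (hG : G.IsNoncrossing)
    (hn : 2 ≤ n) : #G.edgeFinset ≤ 2 * n - 3 := by
  have hsurj : Set.SurjOn (fun e : ZMod n × ZMod n => s(e.1, e.2)) (G.edgesWithin 0 (n - 1))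
      G.edgeFinset := by
    intro e he
    induction e using Sym2.ind with | _ x y => ?_
    rw [mem_coe, mem_edgeFinset, mem_edgeSet] at he
    have hx := (x - 0).val_lt
    have hy := (y - 0).val_lt
    rcases lt_or_gt_of_ne fun h => G.ne_of_adj he (eq_of_val_sub_eq h) with h | h
    · exact ⟨(x, y), mem_edgesWithin.2 ⟨he, h, by omega⟩, rfl⟩
    · exact ⟨(y, x), mem_edgesWithin.2 ⟨he.symm, h, by omega⟩, Sym2.eq_swap⟩
  have := card_le_card_of_surjOn _ hsurj
  have := card_edgesWithin_le hcyc hG (k := n - 1) (by omega) (by omega) 0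
  omega

theorem adj_of_forall_not_strictArc (hcyc : ∀ i : ZMod n, G.Adj i (i + 1))
    (hG : G.IsNoncrossing) (hn : 2 ≤ n) (hcard : #G.edgeFinset = 2 * n - 3) {p q : ZMod n}
    (hpq : p ≠ q) (h : ∀ c d, G.Adj c d → StrictArc p q c → ¬StrictArc q p d) : G.Adj p q := by
  by_contra hnadj
  have hG' : (G ⊔ edge p q).IsNoncrossing := hG.sup_edge fun c d hcd hx =>
    hx.elim (fun hx => h c d hcd hx.1 hx.2) fun hx => h d c hcd.symm hx.1 hx.2
  have : #G.edgeFinset + 1 ≤ 2 * n - 3 := by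
    convert card_edgeFinset_le (fun i => Or.inl (hcyc i)) hG' hn using 1
    convert (G.card_edgeFinset_sup_edge hnadj hpq).symm
  omega

theorem exists_adj_adj_of_adj (hcyc : ∀ i : ZMod n, G.Adj i (i + 1)) (hG : G.IsNoncrossing)
    (hn : 2 ≤ n) (hcard : #G.edgeFinset = 2 * n - 3) {u v : ZMod n} (huv : G.Adj u v)
    (hv : v ≠ u + 1) : ∃ x, StrictArc u v x ∧ G.Adj u x ∧ G.Adj x v := by
  have h1 : (u + 1 - u).val = 1 := by rw [add_sub_cancel_left, val_one'' (by omega)]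
  have hu : (u - u).val = 0 := by rw [sub_self, val_zero]
  have hk := one_lt_val_sub (G.ne_of_adj huv) hv
  -- The neighbour `x` of `u` farthest along the arc: an edge crossing `xv` would cross `uv` or
  -- `ux`, or join `u` to a vertex beyond `x`.
  obtain ⟨x, hx, hmax⟩ := exists_max_image (univ.filter fun x => G.Adj u x ∧ StrictArc u v x)
    (fun x => (x - u).val) ⟨u + 1, mem_filter.2 ⟨mem_univ _, hcyc u, by
      rw [StrictArc, h1]; omega⟩⟩
  obtain ⟨-, hux, hx⟩ := mem_filter.1 hx
  refine ⟨x, hx, hux, adj_of_forall_not_strictArc hcyc hG hn hcard ?_ ?_⟩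
  · rintro rfl
    exact hx.2.false
  intro c d hcd hc hd
  obtain ⟨hx0, hxv⟩ := hx
  rw [strictArc_iff_of_le u hxv.le] at hc
  rw [strictArc_iff_of_lt u hxv] at hd
  rcases hd with hd | hd
  · have := hG.val_sub_mem_Icc u huv (hu ▸ hx0.trans hc.1) hc.2 hcd
    exact absurd this.2 (not_le.2 hd)
  obtain hd0 | hd0 := Nat.eq_zero_or_pos (d - u).val
  · have hdu : d = u := eq_of_val_sub_eq (hu ▸ hd0)
    subst hdu
    exact absurd (hmax c (mem_filter.2 ⟨mem_univ _, hcd.symm,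
      (strictArc_iff_of_le d (by rw [hu]; omega)).2 ⟨by omega, hc.2⟩⟩)) (not_le.2 hc.1)
  · have := hG.val_sub_mem_Icc u hux (hu ▸ hd0) hd hcd.symm
    exact absurd this.2 (not_le.2 hc.1)

theorem degree_eq_two_iff (hcyc : ∀ i : ZMod n, G.Adj i (i + 1)) (hn : 3 ≤ n) {w : ZMod n} :
    G.degree w = 2 ↔ ∀ y, G.Adj w y → y = w - 1 ∨ y = w + 1 := by
  have hsub : ({w - 1, w + 1} : Finset (ZMod n)) ⊆ G.neighborFinset w := by
    intro y hy
    rw [mem_insert, mem_singleton] at hy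
    rw [mem_neighborFinset]
    rcases hy with rfl | rfl
    · simpa using (hcyc (w - 1)).symm
    · exact hcyc w
  have hne : w - 1 ≠ w + 1 := fun h => by
    have h2 : ((2 : ℕ) : ZMod n) = 0 := by push_cast; linear_combination -h
    exact natCast_ne_zero_of_lt two_pos (by omega) h2
  rw [← card_neighborFinset_eq_degree, ← card_pair hne]
  constructor
  · intro h y hy
    have hy := (mem_neighborFinset ..).2 hy
    rw [← eq_of_subset_of_card_le hsub h.le] at hy
    simpa using hy
  · intro h
    rw [← Subset.antisymm hsub fun y hy => by simpa using h y ((mem_neighborFinset ..).1 hy)]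

theorem exists_degree_eq_two (hcyc : ∀ i : ZMod n, G.Adj i (i + 1)) (hG : G.IsNoncrossing)
    {u v : ZMod n} (huv : G.Adj u v) (hv : v ≠ u + 1) : ∃ w, StrictArc u v w ∧ G.degree w = 2 := by
  have hk := one_lt_val_sub (G.ne_of_adj huv) hv
  have hvn := (v - u).val_lt
  -- A shortest chord `cd` nested in `uv`: a chord at `c + 1` would be shorter.
  obtain ⟨⟨c, d⟩, hcd, hmin⟩ := exists_min_image
    ((G.edgesWithin u (v - u).val).filter fun e => (e.1 - u).val + 1 < (e.2 - u).val)
    (fun e => (e.2 - u).val - (e.1 - u).val)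
    ⟨(u, v), mem_filter.2 ⟨mem_edgesWithin.2 ⟨huv, by rw [sub_self, val_zero]; omega, le_rfl⟩,
      by rw [sub_self, val_zero]; omega⟩⟩
  obtain ⟨hcd, hlen⟩ := mem_filter.1 hcd
  dsimp only at hlen hmin
  obtain ⟨hcd, -, hdv⟩ := mem_edgesWithin.1 hcd
  have hw : (c + 1 - u).val = (c - u).val + 1 := val_add_one_sub (by omega)
  refine ⟨c + 1, ⟨by omega, by omega⟩, (degree_eq_two_iff hcyc (by omega)).2 fun y hy => ?_⟩
  obtain ⟨hcy, hyd⟩ := hG.val_sub_mem_Icc u hcd (by omega) (by omega) hy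
  have hyw : (y - u).val ≠ (c - u).val + 1 := fun h =>
    G.ne_of_adj hy (eq_of_val_sub_eq (hw.trans h.symm))
  obtain hyc | hyc := hcy.eq_or_lt
  · exact Or.inl (by rw [add_sub_cancel_right]; exact eq_of_val_sub_eq hyc.symm)
  obtain hy2 | hy2 := (show (c - u).val + 2 ≤ (y - u).val by omega).eq_or_lt
  · exact Or.inr (eq_of_val_sub_eq (by rw [← hy2, val_add_one_sub (by omega), hw]))
  have := hmin (c + 1, y) (mem_filter.2 ⟨mem_edgesWithin.2 ⟨hy, by omega, by omega⟩, by
    simp only; omega⟩)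
  simp only at this
  omega

theorem exists_ne_degree_eq_two (hcyc : ∀ i : ZMod n, G.Adj i (i + 1)) (hG : G.IsNoncrossing)
    {u v x : ZMod n} (hux : G.Adj u x) (hxv : G.Adj x v) (hx : StrictArc u v x)
    (hxu : x ≠ u + 1) (hvx : v ≠ x + 1) :
    ∃ w₁ w₂, w₁ ≠ w₂ ∧ StrictArc u v w₁ ∧ StrictArc u v w₂ ∧ G.degree w₁ = 2 ∧
      G.degree w₂ = 2 := by
  obtain ⟨w₁, ⟨hw₁0, hw₁x⟩, hd₁⟩ := exists_degree_eq_two hcyc hG hux hxu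
  obtain ⟨w₂, hw₂, hd₂⟩ := exists_degree_eq_two hcyc hG hxv hvx
  obtain ⟨hx0, hxv'⟩ := hx
  obtain ⟨hxw₂, hw₂v⟩ := (strictArc_iff_of_le u hxv'.le).1 hw₂
  exact ⟨w₁, w₂, by rintro rfl; omega, ⟨hw₁0, by omega⟩, ⟨by omega, hw₂v⟩, hd₁, hd₂⟩

theorem degree_eq_three (hcyc : ∀ i : ZMod n, G.Adj i (i + 1)) (hG : G.IsNoncrossing)
    (hn : 4 ≤ n) {p v : ZMod n} (hp : G.Adj p (p + 3)) (hv : v = p + 1 ∨ v = p + 2)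
    (hvp : G.Adj v p) (hvq : G.Adj v (p + 3)) : G.degree v = 3 := by
  have hpos : ∀ i < 4, (p + (i : ℕ) - p).val = i := fun i hi => by
    rw [add_sub_cancel_left, val_cast_of_lt (by omega)]
  have hinj : Set.InjOn (fun i : ℕ => p + i) (range 4) := fun i hi j hj hij => by
    have := congrArg (fun y => (y - p).val) hij
    dsimp only at this
    rwa [hpos i (mem_range.1 hi), hpos j (mem_range.1 hj)] at this
  have h1 := hpos 1 (by norm_num)
  have h2 := hpos 2 (by norm_num)
  have h3 := hpos 3 (by norm_num)
  push_cast at h1 h2 h3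
  have hvpos : (v - p).val = 1 ∨ (v - p).val = 2 := by
    rcases hv with rfl | rfl
    exacts [Or.inl h1, Or.inr h2]
  have hN : G.neighborFinset v = ((range 4).image fun i : ℕ => p + i).erase v := by
    ext y
    rw [mem_neighborFinset, mem_erase, mem_image]
    constructor
    · intro hy
      have hy3 := (hG.val_sub_mem_Icc p hp (by rw [sub_self, val_zero]; omega)
        (by rw [h3]; omega) hy).2
      rw [h3] at hy3
      exact ⟨(G.ne_of_adj hy).symm, (y - p).val, mem_range.2 (by omega), add_val_sub p y⟩
    · rintro ⟨hyv, i, hi, rfl⟩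
      rw [mem_range] at hi
      interval_cases i <;> rcases hv with rfl | rfl <;> push_cast at hyv ⊢ <;>
        first
        | exact absurd rfl hyv
        | simpa using hvp
        | exact hvq
        | simpa [add_assoc, one_add_one_eq_two] using hcyc (p + 1)
        | simpa [add_assoc, one_add_one_eq_two] using (hcyc (p + 1)).symm
  rw [← card_neighborFinset_eq_degree, hN, card_erase_of_mem (mem_image.2
    ⟨(v - p).val, mem_range.2 (by omega), add_val_sub p v⟩), card_image_of_injOn hinj, card_range]

theorem adj_add_one_sub_one (hcyc : ∀ i : ZMod n, G.Adj i (i + 1)) (hG : G.IsNoncrossing)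
    (hn : 3 ≤ n) (hcard : #G.edgeFinset = 2 * n - 3) {s : ZMod n} (hs : G.degree s = 2) :
    G.Adj (s + 1) (s - 1) := by
  have h2 : s ≠ s + 1 + 1 := by
    rw [add_assoc, ne_eq, left_eq_add]
    exact_mod_cast natCast_ne_zero_of_lt (k := 2) two_pos (by omega)
  obtain ⟨x, hx, h1x, hxs⟩ := exists_adj_adj_of_adj hcyc hG (by omega) hcard (hcyc s).symm h2
  rcases (degree_eq_two_iff hcyc hn).1 hs x hxs.symm with rfl | rfl
  · exact h1x
  · exact absurd hx.1 (by simp)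

end SimpleGraph

open SimpleGraph

theorem internally_triangulated_outerplane_neighbor_of_s_degree_three_general
    {n : ℕ} [NeZero n] (hn : 4 ≤ n)
    (G : SimpleGraph (ZMod n)) [DecidableRel G.Adj]
    (houter : ∀ i : ZMod n, G.Adj i (i + 1))
    (hnocross : ∀ e₁ ∈ G.edgeSet, ∀ e₂ ∈ G.edgeSet,
      ∀ a b c d : ZMod n, e₁ = s(a, b) → e₂ = s(c, d) → ¬ChordsCross a b c d)
    (htriangulated : G.edgeFinset.card = 2 * n - 3)
    (s t : ZMod n)
    (hdeg2 : ∀ v : ZMod n, G.degree v = 2 ↔ (v = s ∨ v = t)) :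
    G.degree (s - 1) = 3 ∨ G.degree (s + 1) = 3 := by
  have hG : G.IsNoncrossing := fun a b c d hab hcd => hnocross _ hab _ hcd a b c d rfl rfl
  have hear := adj_add_one_sub_one houter hG (by omega) htriangulated ((hdeg2 s).2 (Or.inl rfl))
  have h3 : s - 1 ≠ s + 1 + 1 := fun h => natCast_ne_zero_of_lt (k := 3) three_pos hn
    (by push_cast; linear_combination -h)
  obtain ⟨x, hx, hbx, hxa⟩ := exists_adj_adj_of_adj houter hG (by omega) htriangulated hear h3
  by_cases hxb : x = s + 1 + 1
  · have hx3 : s - 1 + 3 = x := by rw [hxb]; ring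
    refine Or.inr (degree_eq_three houter hG hn (p := s - 1) (hx3 ▸ hxa.symm) (Or.inr (by ring))
      hear ?_)
    rw [hx3, hxb]
    exact houter (s + 1)
  by_cases hxa' : s - 1 = x + 1
  · have hx3 : x + 3 = s + 1 := by linear_combination -hxa'
    exact Or.inl (degree_eq_three houter hG hn (p := x) (hx3 ▸ hbx.symm) (Or.inl hxa')
      (hxa' ▸ (houter x).symm) (hx3 ▸ hear.symm))
  obtain ⟨w₁, w₂, hne, hw₁, hw₂, hd₁, hd₂⟩ :=
    exists_ne_degree_eq_two houter hG hbx hxa hx hxb hxa'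
  have hwt : ∀ w, StrictArc (s + 1) (s - 1) w → G.degree w = 2 → w = t := fun w hw hd =>
    ((hdeg2 w).1 hd).resolve_left fun hws => hw.ne_add_one (by rw [hws, sub_add_cancel])
  exact (hne ((hwt w₁ hw₁ hd₁).trans (hwt w₂ hw₂ hd₂).symm)).elim

/-- Let `O` be an internally triangulated biconnected outerplane graph on `n ≥ 4`
vertices (vertices identified with `ZMod n` in the cyclic order of its outer cycle,
chords pairwise non-crossing, and `2n - 3` edges, which expresses that every inner
face is a triangle).  If the only vertices of degree 2 are `s` and `t`, then at
least one of the two neighbors of `s` on the outer cycle has degree exactly 3. -/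
theorem internally_triangulated_outerplane_neighbor_of_s_degree_three
    {n : ℕ} [NeZero n] (hn : 4 ≤ n)
    (G : SimpleGraph (ZMod n)) [DecidableRel G.Adj]
    (houter : ∀ i : ZMod n, G.Adj i (i + 1))
    (hnocross : ∀ e₁ ∈ G.edgeSet, ∀ e₂ ∈ G.edgeSet,
      ∀ a b c d : ZMod n, e₁ = s(a, b) → e₂ = s(c, d) → ¬ChordsCross a b c d)
    (htriangulated : G.edgeFinset.card = 2 * n - 3)
    (s t : ZMod n) (hst : s ≠ t)
    (hdeg2 : ∀ v : ZMod n, G.degree v = 2 ↔ (v = s ∨ v = t)) :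
    G.degree (s - 1) = 3 ∨ G.degree (s + 1) = 3 :=
  internally_triangulated_outerplane_neighbor_of_s_degree_three_general hn G houter hnocross
    htriangulated s t hdeg2
end

section
/- Let Q be a diamond, i.e., a convex quadrilateral with vertices N, E, S, W satisfying |NW| = |NE| = |SW| = |SE|. Then Q contains a left boomerang N, E_l, S, W and a right boomerang N, E, S, W_r with disjoint interiors, where E_l and W_r are points on segment WE with E_l strictly between W and W_r. -/
noncomputable section

abbrev Pt := EuclideanSpace ℝ (Fin 2)

/-- A diamond: a convex quadrilateral `N, E, S, W` (diagonals `NS` and `WE` cross)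
with `|NW| = |NE| = |SW| = |SE|`. -/
def Diamond (N E S W : Pt) : Prop :=
  dist N W = dist N E ∧ dist N E = dist S W ∧ dist S W = dist S E ∧
    N ≠ S ∧ E ≠ W ∧ (openSegment ℝ W E ∩ openSegment ℝ N S).Nonempty

/-- A left boomerang: a quadrilateral `N, E, S, W` with `E` inside triangle `NSW`,
`|NE| = |SE|` and `|NW| = |SW|`. -/
def LeftBoomerang (N E S W : Pt) : Prop :=
  dist N E = dist S E ∧ dist N W = dist S W ∧
    E ∈ interior (convexHull ℝ ({N, S, W} : Set Pt))

/-- A right boomerang: a quadrilateral `N, E, S, W` with `W` inside triangle `NSE`,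
`|NW| = |SW|` and `|NE| = |SE|`. -/
def RightBoomerang (N E S W : Pt) : Prop :=
  dist N W = dist S W ∧ dist N E = dist S E ∧
    W ∈ interior (convexHull ℝ ({N, S, E} : Set Pt))

/-- The closed region bounded by a (possibly non-convex) quadrilateral with vertices
`A, B, C, D` in this cyclic order: the union of triangles `ABD` and `BCD`. -/
def QuadRegion (A B C D : Pt) : Set Pt :=
  convexHull ℝ ({A, B, D} : Set Pt) ∪ convexHull ℝ ({B, C, D} : Set Pt)

open RealInnerProductSpace AffineSubspace

lemma mem_interior_triangle {A B C : Pt} (h : ¬ Collinear ℝ ({A, B, C} : Set Pt))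
    {a b c : ℝ} (ha : 0 < a) (hb : 0 < b) (hc : 0 < c) (habc : a + b + c = 1) :
    a • A + b • B + c • C ∈ interior (convexHull ℝ ({A, B, C} : Set Pt)) := by
  have hind : AffineIndependent ℝ ![A, B, C] := affineIndependent_iff_not_collinear_set.2 h
  have htot : affineSpan ℝ (Set.range ![A, B, C]) = ⊤ := by
    rw [hind.affineSpan_eq_top_iff_card_eq_finrank_add_one]
    simp [finrank_euclideanSpace_fin]
  let bas : AffineBasis (Fin 3) ℝ Pt := ⟨![A, B, C], hind, htot⟩
  have hrange : Set.range (bas : Fin 3 → Pt) = ({A, B, C} : Set Pt) := by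
    show Set.range ![A, B, C] = _
    ext x
    constructor
    · rintro ⟨i, rfl⟩; fin_cases i <;> simp
    · rintro (rfl | rfl | rfl)
      exacts [⟨0, rfl⟩, ⟨1, rfl⟩, ⟨2, rfl⟩]
  have hsum : (Finset.univ : Finset (Fin 3)).sum ![a, b, c] = 1 := by
    simp [Fin.sum_univ_three, habc]
  have hx : a • A + b • B + c • C
      = Finset.univ.affineCombination ℝ (bas : Fin 3 → Pt) ![a, b, c] := by
    rw [Finset.affineCombination_eq_linear_combination _ _ _ hsum]
    show _ = ∑ i : Fin 3, (![a, b, c] i) • (![A, B, C] i)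
    simp [Fin.sum_univ_three]
  rw [← hrange, bas.interior_convexHull]
  intro i
  rw [hx, bas.coord_apply_combination_of_mem (Finset.mem_univ i) hsum]
  fin_cases i <;> [exact ha; exact hb; exact hc]

lemma interior_halfspace_le {u : Pt} (hu : u ≠ 0) (r : ℝ) :
    interior {x : Pt | ⟪u, x⟫ ≤ r} = {x : Pt | ⟪u, x⟫ < r} := by
  have hf : (innerSL ℝ u : Pt →L[ℝ] ℝ) ≠ 0 := by
    intro hcon
    have h0 : ⟪u, u⟫ = 0 := by
      have := congrFun (congrArg (fun f : Pt →L[ℝ] ℝ => (f : Pt → ℝ)) hcon) u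
      simpa using this
    exact hu (inner_self_eq_zero.1 h0)
  have hopen : IsOpenMap (innerSL ℝ u : Pt →L[ℝ] ℝ) :=
    ContinuousLinearMap.isOpenMap_of_ne_zero _ hf
  have h1 : {x : Pt | ⟪u, x⟫ ≤ r} = (innerSL ℝ u : Pt →L[ℝ] ℝ) ⁻¹' (Set.Iic r) := rfl
  rw [h1, ← hopen.preimage_interior_eq_interior_preimage (innerSL ℝ u).continuous,
    interior_Iic]
  rfl

lemma interior_halfspace_ge {u : Pt} (hu : u ≠ 0) (r : ℝ) :
    interior {x : Pt | r ≤ ⟪u, x⟫} = {x : Pt | r < ⟪u, x⟫} := by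
  have hf : (innerSL ℝ u : Pt →L[ℝ] ℝ) ≠ 0 := by
    intro hcon
    have h0 : ⟪u, u⟫ = 0 := by
      have := congrFun (congrArg (fun f : Pt →L[ℝ] ℝ => (f : Pt → ℝ)) hcon) u
      simpa using this
    exact hu (inner_self_eq_zero.1 h0)
  have hopen : IsOpenMap (innerSL ℝ u : Pt →L[ℝ] ℝ) :=
    ContinuousLinearMap.isOpenMap_of_ne_zero _ hf
  have h1 : {x : Pt | r ≤ ⟪u, x⟫} = (innerSL ℝ u : Pt →L[ℝ] ℝ) ⁻¹' (Set.Ici r) := rfl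
  rw [h1, ← hopen.preimage_interior_eq_interior_preimage (innerSL ℝ u).continuous,
    interior_Ici]
  rfl

set_option maxHeartbeats 1000000 in
/-- A diamond `N, E, S, W` with diagonal `WE` contains a left boomerang `N, Eₗ, S, W`
and a right boomerang `N, E, S, Wᵣ` with disjoint interiors, where `Eₗ` and `Wᵣ` lie
on segment `WE` with `Eₗ` strictly between `W` and `Wᵣ`. -/
theorem diamond_contains_disjoint_boomerangs
    (N E S W : Pt) (h : Diamond N E S W) :
    ∃ El Wr : Pt,
      Wr ∈ openSegment ℝ W E ∧ El ∈ openSegment ℝ W Wr ∧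
      LeftBoomerang N El S W ∧ RightBoomerang N E S Wr ∧
      QuadRegion N El S W ⊆ convexHull ℝ ({N, E, S, W} : Set Pt) ∧
      QuadRegion N E S Wr ⊆ convexHull ℝ ({N, E, S, W} : Set Pt) ∧
      interior (QuadRegion N El S W) ∩ interior (QuadRegion N E S Wr) = ∅ := by
  obtain ⟨h1, h2, h3, hNS, hEW, M, hMWE, hMNS⟩ := h
  have hdW : dist N W = dist S W := h1.trans h2
  have hdE : dist N E = dist S E := h2.trans h3
  have horth0 : ⟪E -ᵥ W, S -ᵥ N⟫ = 0 :=
    EuclideanGeometry.inner_vsub_vsub_of_dist_eq_of_dist_eq hdW hdE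
  set u : Pt := E - W with hudef
  have hu : u ≠ 0 := sub_ne_zero.2 hEW
  have horth : ⟪u, S - N⟫ = 0 := by simpa [vsub_eq_sub] using horth0
  obtain ⟨a, b, ha, hb, hab, hM⟩ := hMWE
  obtain ⟨p, q, hp, hq, hpq, hMns⟩ := hMNS
  have ha' : a = 1 - b := by linarith
  subst ha'
  have hb1 : b < 1 := by linarith
  set K : ℝ := ⟪u, u⟫ with hKdef
  have hK : 0 < K := by
    rw [hKdef, real_inner_self_eq_norm_sq]
    exact pow_pos (norm_pos_iff.2 hu) 2
  set r : ℝ := ⟪u, N⟫ with hrdef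
  have hSr : ⟪u, S⟫ = r := by
    have h' : ⟪u, S⟫ - ⟪u, N⟫ = 0 := by rw [← inner_sub_right]; exact horth
    linarith
  have hMr : ⟪u, M⟫ = r := by
    rw [← hMns, inner_add_right, real_inner_smul_right, real_inner_smul_right, hSr, ← hrdef]
    linear_combination r * hpq
  have hWM : M - W = b • u := by rw [← hM, hudef]; module
  have hWr : ⟪u, W⟫ = r - b * K := by
    have h' : ⟪u, M - W⟫ = ⟪u, b • u⟫ := by rw [hWM]
    rw [inner_sub_right, real_inner_smul_right, hMr, ← hKdef] at h'
    linarith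
  have hME : E - M = (1 - b) • u := by rw [← hM, hudef]; module
  have hEr : ⟪u, E⟫ = r + (1 - b) * K := by
    have h' : ⟪u, E - M⟫ = ⟪u, (1 - b) • u⟫ := by rw [hME]
    rw [inner_sub_right, real_inner_smul_right, hMr, ← hKdef] at h'
    linarith
  set El : Pt := (1/2 : ℝ) • W + (1/2 : ℝ) • M with hEldef
  set Wr : Pt := (1/2 : ℝ) • M + (1/2 : ℝ) • E with hWrdef
  have hElr : ⟪u, El⟫ = r - (b / 2) * K := by
    rw [hEldef, inner_add_right, real_inner_smul_right, real_inner_smul_right, hMr, hWr]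
    ring
  have hWrr : ⟪u, Wr⟫ = r + ((1 - b) / 2) * K := by
    rw [hWrdef, inner_add_right, real_inner_smul_right, real_inner_smul_right, hMr, hEr]
    ring
  -- non-collinearity
  have key : ∀ X : Pt, ⟪u, X⟫ ≠ r → ¬ Collinear ℝ ({N, S, X} : Set Pt) := by
    intro X hX hcol
    have hmem : X ∈ affineSpan ℝ ({N, S} : Set Pt) :=
      hcol.mem_affineSpan_of_mem_of_ne (Set.mem_insert _ _)
        (by simp) (by simp) hNS
    have hdir : X -ᵥ N ∈ (affineSpan ℝ ({N, S} : Set Pt)).direction :=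
      AffineSubspace.vsub_mem_direction hmem (mem_affineSpan ℝ (Set.mem_insert _ _))
    rw [direction_affineSpan, vectorSpan_pair_rev] at hdir
    obtain ⟨t, ht⟩ := Submodule.mem_span_singleton.1 hdir
    have h' : ⟪u, X - N⟫ = 0 := by
      rw [← vsub_eq_sub, ← ht, real_inner_smul_right]
      simp [vsub_eq_sub, horth]
    rw [inner_sub_right, ← hrdef, sub_eq_zero] at h'
    exact hX h'
  have hNSW : ¬ Collinear ℝ ({N, S, W} : Set Pt) := by
    apply key; rw [hWr]; nlinarith
  have hNSE : ¬ Collinear ℝ ({N, S, E} : Set Pt) := by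
    apply key; rw [hEr]; nlinarith
  -- interior of triangles
  have hElcomb : El = (p/2) • N + (q/2) • S + (1/2 : ℝ) • W := by
    rw [hEldef, ← hMns]; module
  have hWrcomb : Wr = (p/2) • N + (q/2) • S + (1/2 : ℝ) • E := by
    rw [hWrdef, ← hMns]; module
  have hElint : El ∈ interior (convexHull ℝ ({N, S, W} : Set Pt)) := by
    rw [hElcomb]
    exact mem_interior_triangle hNSW (by positivity) (by positivity) (by norm_num) (by linarith)
  have hWrint : Wr ∈ interior (convexHull ℝ ({N, S, E} : Set Pt)) := by
    rw [hWrcomb]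
    exact mem_interior_triangle hNSE (by positivity) (by positivity) (by norm_num) (by linarith)
  -- segment memberships
  have hWrseg : Wr ∈ openSegment ℝ W E := by
    refine ⟨(1 - b)/2, (1 + b)/2, by linarith, by linarith, by ring, ?_⟩
    rw [hWrdef, ← hM]; module
  have h1b : (1 : ℝ) + b ≠ 0 := by positivity
  have hElseg : El ∈ openSegment ℝ W Wr := by
    refine ⟨1/(1+b), b/(1+b), div_pos one_pos (by linarith), div_pos hb (by linarith),
      by field_simp, ?_⟩
    rw [hWrdef, hEldef, ← hM]
    match_scalars <;> (field_simp; ring)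
  have hElsegWE : El ∈ segment ℝ W E := by
    refine ⟨(2 - b)/2, b/2, by linarith, by linarith, by ring, ?_⟩
    rw [hEldef, ← hM]; module
  have hWrsegWE : Wr ∈ segment ℝ W E := by
    refine ⟨(1 - b)/2, (1 + b)/2, by linarith, by linarith, by ring, ?_⟩
    rw [hWrdef, ← hM]; module
  -- boomerangs
  have hWperp : W ∈ perpBisector N S := mem_perpBisector_iff_dist_eq'.2 hdW
  have hEperp : E ∈ perpBisector N S := mem_perpBisector_iff_dist_eq'.2 hdE
  have hElperp : El ∈ perpBisector N S :=
    (perpBisector N S).convex.segment_subset hWperp hEperp hElsegWE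
  have hWrperp : Wr ∈ perpBisector N S :=
    (perpBisector N S).convex.segment_subset hWperp hEperp hWrsegWE
  have hLB : LeftBoomerang N El S W :=
    ⟨mem_perpBisector_iff_dist_eq'.1 hElperp, hdW, hElint⟩
  have hRB : RightBoomerang N E S Wr :=
    ⟨mem_perpBisector_iff_dist_eq'.1 hWrperp, hdE, hWrint⟩
  -- subsets of the big hull
  have hconv := convex_convexHull ℝ ({N, E, S, W} : Set Pt)
  have hNmem : N ∈ convexHull ℝ ({N, E, S, W} : Set Pt) := subset_convexHull _ _ (by simp)
  have hEmem : E ∈ convexHull ℝ ({N, E, S, W} : Set Pt) := subset_convexHull _ _ (by simp)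
  have hSmem : S ∈ convexHull ℝ ({N, E, S, W} : Set Pt) := subset_convexHull _ _ (by simp)
  have hWmem : W ∈ convexHull ℝ ({N, E, S, W} : Set Pt) := subset_convexHull _ _ (by simp)
  have hElmem : El ∈ convexHull ℝ ({N, E, S, W} : Set Pt) :=
    hconv.segment_subset hWmem hEmem hElsegWE
  have hWrmem : Wr ∈ convexHull ℝ ({N, E, S, W} : Set Pt) :=
    hconv.segment_subset hWmem hEmem hWrsegWE
  have hsubL : QuadRegion N El S W ⊆ convexHull ℝ ({N, E, S, W} : Set Pt) := by
    refine Set.union_subset (convexHull_min ?_ hconv) (convexHull_min ?_ hconv) <;>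
      simp only [Set.insert_subset_iff, Set.singleton_subset_iff] <;>
      exact ⟨by assumption, by assumption, by assumption⟩
  have hsubR : QuadRegion N E S Wr ⊆ convexHull ℝ ({N, E, S, W} : Set Pt) := by
    refine Set.union_subset (convexHull_min ?_ hconv) (convexHull_min ?_ hconv) <;>
      simp only [Set.insert_subset_iff, Set.singleton_subset_iff] <;>
      exact ⟨by assumption, by assumption, by assumption⟩
  -- disjoint interiors
  have hlin : IsLinearMap ℝ (fun x : Pt => ⟪u, x⟫) :=
    ⟨fun x y => inner_add_right u x y, fun c x => real_inner_smul_right u x c⟩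
  have hcle : Convex ℝ {x : Pt | ⟪u, x⟫ ≤ r} := convex_halfSpace_le hlin r
  have hcge : Convex ℝ {x : Pt | r ≤ ⟪u, x⟫} := convex_halfSpace_ge hlin r
  have hNle : ⟪u, N⟫ ≤ r := hrdef.ge
  have hSle : ⟪u, S⟫ ≤ r := hSr.le
  have hWle : ⟪u, W⟫ ≤ r := by rw [hWr]; nlinarith
  have hElle : ⟪u, El⟫ ≤ r := by rw [hElr]; nlinarith
  have hNge : r ≤ ⟪u, N⟫ := hrdef.le
  have hSge : r ≤ ⟪u, S⟫ := hSr.ge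
  have hEge : r ≤ ⟪u, E⟫ := by rw [hEr]; nlinarith
  have hWrge : r ≤ ⟪u, Wr⟫ := by rw [hWrr]; nlinarith
  have hQle : QuadRegion N El S W ⊆ {x : Pt | ⟪u, x⟫ ≤ r} := by
    refine Set.union_subset (convexHull_min ?_ hcle) (convexHull_min ?_ hcle) <;>
      simp only [Set.insert_subset_iff, Set.singleton_subset_iff, Set.mem_setOf_eq]
    · exact ⟨hNle, hElle, hWle⟩
    · exact ⟨hElle, hSle, hWle⟩
  have hQge : QuadRegion N E S Wr ⊆ {x : Pt | r ≤ ⟪u, x⟫} := by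
    refine Set.union_subset (convexHull_min ?_ hcge) (convexHull_min ?_ hcge) <;>
      simp only [Set.insert_subset_iff, Set.singleton_subset_iff, Set.mem_setOf_eq]
    · exact ⟨hNge, hEge, hWrge⟩
    · exact ⟨hEge, hSge, hWrge⟩
  have hintL : interior (QuadRegion N El S W) ⊆ {x : Pt | ⟪u, x⟫ < r} := by
    rw [← interior_halfspace_le hu r]
    exact interior_mono hQle
  have hintR : interior (QuadRegion N E S Wr) ⊆ {x : Pt | r < ⟪u, x⟫} := by
    rw [← interior_halfspace_ge hu r]
    exact interior_mono hQge
  have hdisj : interior (QuadRegion N El S W) ∩ interior (QuadRegion N E S Wr) = ∅ := by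
    rw [Set.eq_empty_iff_forall_notMem]
    rintro x ⟨hx1, hx2⟩
    have h1' := hintL hx1
    have h2' := hintR hx2
    rw [Set.mem_setOf_eq] at h1' h2'
    linarith
  exact ⟨El, Wr, hWrseg, hElseg, hLB, hRB, hsubL, hsubR, hdisj⟩

end
end

section
/- Let T be a triangle with vertices N, W, S, let C be the midpoint of segment WS (or any interior point of a cevian from N), and subdivide segment NC into k equal-length segments. Then pairwise-disjoint convex quadrilaterals (diamonds) can be drawn, each containing exactly one of these segments as a diagonal, such that all the diamonds are contained in T and their interiors are pairwise disjoint. -/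
noncomputable section

/-- The `i`-th subdivision point of segment `NC` divided into `k` equal parts. -/
def subPt (N C : Pt) (k i : ℕ) : Pt :=
  AffineMap.lineMap N C ((i : ℝ) / (k : ℝ))

/-!
Write `P i` for `subPt N C k i`. The `i`-th diamond is the rhombus whose diagonals are the piece
`[P i, P (i+1)]` of the cevian and a short segment through its midpoint perpendicular to the
cevian. That midpoint has positive barycentric coordinates, hence is interior to the triangle, so
a short enough perpendicular diagonal keeps the rhombus inside. The rhombus lies in the slab
between the hyperplanes through `P i` and `P (i+1)` perpendicular to the cevian; a nonzero linear
functional is an open map, so its interior lies in the open slab, and these open slabs are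
pairwise disjoint.
-/

open Set Topology Module AffineMap
open scoped RealInnerProductSpace

theorem interior_subset_preimage_Ioo {E : Type*} [AddCommGroup E] [TopologicalSpace E]
    [ContinuousAdd E] [Module ℝ E] [ContinuousSMul ℝ E] {f : StrongDual ℝ E} (hf : f ≠ 0)
    {A : Set E} {a b : ℝ} (hA : A ⊆ f ⁻¹' Icc a b) : interior A ⊆ f ⁻¹' Ioo a b := by
  rw [← interior_Icc]
  exact (interior_mono hA).trans
    (f.isOpenMap_of_ne_zero hf).interior_preimage_subset_preimage_interior

section InnerProductSpace

variable {E : Type*} [NormedAddCommGroup E] [InnerProductSpace ℝ E]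

theorem exists_ne_zero_inner_eq_zero [FiniteDimensional ℝ E] (hE : 2 ≤ finrank ℝ E) (u : E) :
    ∃ v ≠ 0, ⟪u, v⟫ = 0 := by
  have hsum := Submodule.finrank_add_finrank_orthogonal (ℝ ∙ u)
  have hspan : finrank ℝ (ℝ ∙ u) ≤ 1 := by simpa using finrank_span_le_card ({u} : Set E)
  obtain ⟨v, hv, hv0⟩ := Submodule.exists_mem_ne_zero_of_ne_bot (p := (ℝ ∙ u)ᗮ) <| by
    intro hbot
    rw [hbot, finrank_bot] at hsum
    omega
  exact ⟨v, hv0, Submodule.mem_orthogonal_singleton_iff_inner_right.mp hv⟩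

theorem exists_inner_eq_zero_add_sub_mem [FiniteDimensional ℝ E] (hE : 2 ≤ finrank ℝ E)
    (u : E) {M : E} {A : Set E} (hA : A ∈ 𝓝 M) :
    ∃ v ≠ 0, ⟪u, v⟫ = 0 ∧ M + v ∈ A ∧ M - v ∈ A := by
  obtain ⟨v, hv, huv⟩ := exists_ne_zero_inner_eq_zero hE u
  have hadd : ∀ᶠ t : ℝ in 𝓝 0, M + t • v ∈ A :=
    (Continuous.tendsto (by fun_prop) 0).eventually (by simpa using hA)
  have hsub : ∀ᶠ t : ℝ in 𝓝 0, M - t • v ∈ A :=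
    (Continuous.tendsto (by fun_prop) 0).eventually (by simpa using hA)
  obtain ⟨t, ⟨hMt, hMt'⟩, ht⟩ :=
    (((hadd.and hsub).filter_mono nhdsWithin_le_nhds).and
      (self_mem_nhdsWithin (s := {0}ᶜ))).exists
  exact ⟨t • v, smul_ne_zero ht hv, by rw [inner_smul_right, huv, mul_zero], hMt, hMt'⟩

theorem convexHull_rhombus_subset_preimage_Icc {P Q v : E} (hv : ⟪Q - P, v⟫ = 0) :
    convexHull ℝ {P, midpoint ℝ P Q + v, Q, midpoint ℝ P Q - v} ⊆
      innerSL ℝ (Q - P) ⁻¹' Icc ⟪Q - P, P⟫ ⟪Q - P, Q⟫ := by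
  have hPQ : ⟪Q - P, P⟫ ≤ ⟪Q - P, Q⟫ := by
    have := real_inner_self_nonneg (x := Q - P)
    rw [inner_sub_right] at this
    linarith
  have hM : ∀ w : E, ⟪Q - P, w⟫ = 0 →
      ⟪Q - P, midpoint ℝ P Q + w⟫ ∈ Icc ⟪Q - P, P⟫ ⟪Q - P, Q⟫ := by
    intro w hw
    rw [inner_add_right, hw, add_zero, midpoint_eq_smul_add, inner_smul_right, inner_add_right]
    constructor <;> norm_num <;> linarith
  refine convexHull_min ?_ ((convex_Icc _ _).linear_preimage (innerSL ℝ (Q - P)).toLinearMap)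
  rintro x (rfl | rfl | rfl | rfl)
  · exact ⟨le_rfl, hPQ⟩
  · exact hM v hv
  · exact ⟨hPQ, le_rfl⟩
  · have := hM (-v) (by rw [inner_neg_right, hv, neg_zero])
    rwa [← sub_eq_add_neg] at this

end InnerProductSpace

theorem AffineBasis.affineCombination_mem_interior_convexHull {ι E : Type*} [Fintype ι]
    [NormedAddCommGroup E] [NormedSpace ℝ E] (b : AffineBasis ι ℝ E) {w : ι → ℝ}
    (hw : ∑ i, w i = 1) (hpos : ∀ i, 0 < w i) :
    Finset.univ.affineCombination ℝ b w ∈ interior (convexHull ℝ (range b)) := by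
  rw [b.interior_convexHull]
  intro i
  rw [b.coord_apply_combination_of_mem (Finset.mem_univ i) hw]
  exact hpos i

theorem AffineIndependent.ne_of_mem_openSegment {E : Type*} [AddCommGroup E] [Module ℝ E]
    {N W S C : E} (hT : AffineIndependent ℝ ![N, W, S]) (hC : C ∈ openSegment ℝ W S) :
    N ≠ C := by
  rintro rfl
  exact affineIndependent_iff_not_collinear_set.mp hT <| collinear_insert_of_mem_affineSpan_pair
    (mem_segment_iff_wbtw.mp (openSegment_subset_segment ℝ W S hC)).mem_affineSpan

theorem lineMap_mem_interior_convexHull_triangle {E : Type*} [NormedAddCommGroup E]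
    [NormedSpace ℝ E] [FiniteDimensional ℝ E] (hE : finrank ℝ E = 2) {N W S C : E}
    (hT : AffineIndependent ℝ ![N, W, S]) (hC : C ∈ openSegment ℝ W S) {t : ℝ}
    (ht : t ∈ Ioo 0 1) : lineMap N C t ∈ interior (convexHull ℝ {N, W, S}) := by
  obtain ⟨a, b, ha, hb, hab, rfl⟩ := hC
  let T : AffineBasis (Fin 3) ℝ E :=
    ⟨![N, W, S], hT, by rw [hT.affineSpan_eq_top_iff_card_eq_finrank_add_one]; simp [hE]⟩
  have hTcoe : (T : Fin 3 → E) = ![N, W, S] := rfl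
  have hrange : range T = {N, W, S} := by
    rw [hTcoe, Matrix.range_cons, Matrix.range_cons_cons_empty, singleton_union]
  have hw : ∑ i, ![1 - t, t * a, t * b] i = 1 := by
    simp only [Fin.sum_univ_three, Matrix.cons_val_zero, Matrix.cons_val_one, Matrix.cons_val]
    linear_combination t * hab
  have hcomb : lineMap N (a • W + b • S) t =
      Finset.univ.affineCombination ℝ T ![1 - t, t * a, t * b] := by
    rw [Finset.affineCombination_eq_linear_combination _ _ _ hw, lineMap_apply_module, hTcoe]
    simp only [Fin.sum_univ_three, Matrix.cons_val]
    module
  rw [← hrange, hcomb]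
  refine T.affineCombination_mem_interior_convexHull hw fun i => ?_
  obtain ⟨ht0, ht1⟩ := ht
  fin_cases i
  · exact sub_pos.2 ht1
  · exact mul_pos ht0 ha
  · exact mul_pos ht0 hb

theorem diamond_midpoint_add_sub {P Q v : Pt} (hPQ : P ≠ Q) (hv : v ≠ 0)
    (horth : ⟪Q - P, v⟫ = 0) :
    Diamond P (midpoint ℝ P Q + v) Q (midpoint ℝ P Q - v) := by
  set w : Pt := (2⁻¹ : ℝ) • (Q - P) with hw
  have hwv : ‖w - v‖ = ‖w + v‖ :=
    norm_sub_eq_norm_add (by rw [hw, real_inner_smul_right, real_inner_comm, horth, mul_zero])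
  have hP : ∀ s : Pt, dist P (midpoint ℝ P Q + s) = ‖w + s‖ := fun s => by
    rw [dist_comm, dist_eq_norm, midpoint_eq_smul_add, invOf_eq_inv]
    congr 1
    module
  have hQ : ∀ s : Pt, dist Q (midpoint ℝ P Q + s) = ‖w - s‖ := fun s => by
    rw [dist_comm, dist_eq_norm, midpoint_eq_smul_add, invOf_eq_inv, ← norm_neg]
    congr 1
    module
  refine ⟨?_, ?_, ?_, hPQ, ?_, midpoint ℝ P Q, mem_openSegment_sub_add _ _,
    midpoint_mem_openSegment P Q⟩
  · rw [sub_eq_add_neg, hP, hP, ← sub_eq_add_neg, hwv]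
  · rw [sub_eq_add_neg, hP, hQ, sub_neg_eq_add]
  · rw [sub_eq_add_neg, hQ, hQ, sub_neg_eq_add, hwv]
  · exact fun h => hv (by linear_combination (norm := module) (2⁻¹ : ℝ) • h)

theorem exists_diamond_of_midpoint_mem_interior {P Q : Pt} (hPQ : P ≠ Q) {A : Set Pt}
    (hA : Convex ℝ A) (hP : P ∈ A) (hQ : Q ∈ A) (hM : midpoint ℝ P Q ∈ interior A) :
    ∃ E W, Diamond P E Q W ∧ convexHull ℝ {P, E, Q, W} ⊆ A ∧
      convexHull ℝ {P, E, Q, W} ⊆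
        innerSL ℝ (Q - P) ⁻¹' Icc ⟪Q - P, P⟫ ⟪Q - P, Q⟫ := by
  obtain ⟨v, hv, horth, hE, hW⟩ := exists_inner_eq_zero_add_sub_mem
    finrank_euclideanSpace_fin.ge (Q - P) (mem_interior_iff_mem_nhds.mp hM)
  refine ⟨_, _, diamond_midpoint_add_sub hPQ hv horth, convexHull_min ?_ hA,
    convexHull_rhombus_subset_preimage_Icc horth⟩
  rintro x (rfl | rfl | rfl | rfl) <;> assumption

theorem subPt_succ_sub (N C : Pt) (k i : ℕ) :
    subPt N C k (i + 1) - subPt N C k i = (k : ℝ)⁻¹ • (C - N) := by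
  simp only [subPt, lineMap_apply_module']
  push_cast
  module

theorem midpoint_subPt_succ (N C : Pt) (k i : ℕ) :
    midpoint ℝ (subPt N C k i) (subPt N C k (i + 1)) =
      lineMap N C (((i : ℝ) + 2⁻¹) / k) := by
  simp only [subPt, midpoint_eq_smul_add, invOf_eq_inv, lineMap_apply_module']
  push_cast
  module

theorem subPt_ne_subPt_succ {N C : Pt} (hNC : N ≠ C) {k i : ℕ} (hi : i < k) :
    subPt N C k i ≠ subPt N C k (i + 1) := by
  rw [ne_comm, ← sub_ne_zero, subPt_succ_sub]
  exact smul_ne_zero (inv_ne_zero (Nat.cast_ne_zero.mpr (Nat.ne_zero_of_lt hi)))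
    (sub_ne_zero.mpr hNC.symm)

theorem monotone_inner_subPt (N C : Pt) (k : ℕ) :
    Monotone fun i => ⟪(k : ℝ)⁻¹ • (C - N), subPt N C k i⟫ :=
  monotone_nat_of_le_succ fun i => by
    rw [← sub_nonneg, ← inner_sub_right, subPt_succ_sub]
    exact real_inner_self_nonneg

theorem subPt_mem_segment (N C : Pt) {k i : ℕ} (hi : i ≤ k) :
    subPt N C k i ∈ segment ℝ N C := by
  rw [segment_eq_image_lineMap]
  exact ⟨_, ⟨by positivity, div_le_one_of_le₀ (by exact_mod_cast hi) k.cast_nonneg⟩, rfl⟩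

theorem exists_diamond_on_subPt {N W S C : Pt} (hT : AffineIndependent ℝ ![N, W, S])
    (hC : C ∈ openSegment ℝ W S) {k i : ℕ} (hi : i < k) :
    ∃ E W', Diamond (subPt N C k i) E (subPt N C k (i + 1)) W' ∧
      convexHull ℝ {subPt N C k i, E, subPt N C k (i + 1), W'} ⊆ convexHull ℝ {N, W, S} ∧
      convexHull ℝ {subPt N C k i, E, subPt N C k (i + 1), W'} ⊆
        innerSL ℝ ((k : ℝ)⁻¹ • (C - N)) ⁻¹' Icc ⟪(k : ℝ)⁻¹ • (C - N), subPt N C k i⟫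
          ⟪(k : ℝ)⁻¹ • (C - N), subPt N C k (i + 1)⟫ := by
  have hconv := convex_convexHull ℝ ({N, W, S} : Set Pt)
  have hsegment : segment ℝ N C ⊆ convexHull ℝ {N, W, S} :=
    hconv.segment_subset (subset_convexHull ℝ _ (by simp)) <| hconv.segment_subset
      (subset_convexHull ℝ _ (by simp)) (subset_convexHull ℝ _ (by simp))
      (openSegment_subset_segment ℝ W S hC)
  have hmid : ((i : ℝ) + 2⁻¹) / k ∈ Ioo 0 1 := by
    have hik : (i : ℝ) + 1 ≤ k := by exact_mod_cast hi
    have hk : (0 : ℝ) < k := by linarith [i.cast_nonneg (α := ℝ)]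
    exact ⟨by positivity, (div_lt_one hk).mpr (by linarith)⟩
  rw [← subPt_succ_sub N C k i]
  refine exists_diamond_of_midpoint_mem_interior
    (subPt_ne_subPt_succ (hT.ne_of_mem_openSegment hC) hi) hconv
    (hsegment (subPt_mem_segment N C hi.le)) (hsegment (subPt_mem_segment N C hi)) ?_
  rw [midpoint_subPt_succ]
  exact lineMap_mem_interior_convexHull_triangle finrank_euclideanSpace_fin hT hC hmid

theorem diamonds_along_cevian_general
    (N W S C : Pt) (hT : AffineIndependent ℝ ![N, W, S])
    (hC : C ∈ openSegment ℝ W S) (k : ℕ) :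
    ∃ Ept Wpt : ℕ → Pt,
      ∀ i < k,
        Diamond (subPt N C k i) (Ept i) (subPt N C k (i + 1)) (Wpt i) ∧
        convexHull ℝ ({subPt N C k i, Ept i, subPt N C k (i + 1), Wpt i} : Set Pt) ⊆
          convexHull ℝ ({N, W, S} : Set Pt) ∧
        ∀ j < k, i ≠ j →
          interior (convexHull ℝ
              ({subPt N C k i, Ept i, subPt N C k (i + 1), Wpt i} : Set Pt)) ∩
            interior (convexHull ℝ
              ({subPt N C k j, Ept j, subPt N C k (j + 1), Wpt j} : Set Pt)) = ∅ := by
  choose! Ept Wpt hdiamond hsub hslab using fun i (hi : i < k) => exists_diamond_on_subPt hT hC hi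
  refine ⟨Ept, Wpt, fun i hi => ⟨hdiamond i hi, hsub i hi, fun j hj hij => ?_⟩⟩
  set f := innerSL ℝ ((k : ℝ)⁻¹ • (C - N))
  have hf : f ≠ 0 := by
    rw [← norm_ne_zero_iff, innerSL_apply_norm, norm_ne_zero_iff, ← subPt_succ_sub N C k i,
      sub_ne_zero]
    exact (subPt_ne_subPt_succ (hT.ne_of_mem_openSegment hC) hi).symm
  exact disjoint_iff_inter_eq_empty.mp <|
    (((monotone_inner_subPt N C k).pairwise_disjoint_on_Ioo_succ hij).preimage f).mono
      (interior_subset_preimage_Ioo hf (hslab i hi)) (interior_subset_preimage_Ioo hf (hslab j hj))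

/-- Let `T` be a (nondegenerate) triangle `N, W, S` and let `C` be an interior point
of segment `WS`.  Subdividing `NC` into `k` equal segments, one can draw `k` diamonds,
each having exactly one of these segments as its diagonal, all contained in `T` and
with pairwise disjoint interiors. -/
theorem diamonds_along_cevian
    (N W S C : Pt) (hT : AffineIndependent ℝ ![N, W, S])
    (hC : C ∈ openSegment ℝ W S) (k : ℕ) (hk : 1 ≤ k) :
    ∃ Ept Wpt : ℕ → Pt,
      ∀ i < k,
        Diamond (subPt N C k i) (Ept i) (subPt N C k (i + 1)) (Wpt i) ∧
        convexHull ℝ ({subPt N C k i, Ept i, subPt N C k (i + 1), Wpt i} : Set Pt) ⊆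
          convexHull ℝ ({N, W, S} : Set Pt) ∧
        ∀ j < k, i ≠ j →
          interior (convexHull ℝ
              ({subPt N C k i, Ept i, subPt N C k (i + 1), Wpt i} : Set Pt)) ∩
            interior (convexHull ℝ
              ({subPt N C k j, Ept j, subPt N C k (j + 1), Wpt j} : Set Pt)) = ∅ :=
  diamonds_along_cevian_general N W S C hT hC k

end
end

section
/- Let a, b, v, u be four points forming a convex quadrilateral (in this cyclic order) in a planar straight-line drawing, with no other vertex of the graph inside the quadrilateral. If the drawing contains the edges (a,v), (v,b), (a,u), (u,b), (u,v) and does not contain edge (a,b), then removing edge (u,v) and adding the straight-line segment between a and b yields a planar straight-line drawing, and the triangle a, b, v contains no vertex of the graph in its interior. -/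
/-- A straight-line planar drawing of a graph. -/
def PlanarPos {V : Type*} (G : SimpleGraph V) (pos : V → ℝ × ℝ) : Prop :=
  Function.Injective pos ∧
    ∀ e₁ ∈ G.edgeSet, ∀ e₂ ∈ G.edgeSet, e₁ ≠ e₂ →
      ∀ a b c d : V, e₁ = s(a, b) → e₂ = s(c, d) →
        segment ℝ (pos a) (pos b) ∩ segment ℝ (pos c) (pos d) ⊆
          pos '' {x | x ∈ e₁ ∧ x ∈ e₂}

/-!
If `a, v, b` were collinear, the crossing point of the diagonals would lie on the edge `a v` or
`v b`, which meets the edge `u v` only at `v`; so `a v b` and `a u b` are genuine triangles. In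
their barycentric coordinates the crossing of the diagonals puts `u` and `v` on opposite sides of
the line `a b`; hence the points strictly inside all four side lines form an open subset of the
quadrilateral that contains the open diagonal `a b`, and every other point of the quadrilateral
lies on a side.

An old edge `x y` through a point `z` of the open diagonal is a side if both its ends are corners.
Otherwise an end `x` lies outside the quadrilateral, and the segment from `z` to `x` leaves it at a
point of a side; by planarity that point is a common vertex, hence `y`. Then `y` lies between `z`
and `x` and `z` between `x` and `y`, so `z = y` is a vertex in the interior. The ends `a`, `b` of
the new edge meet old edges only at common vertices, as they already carry edges. Finally, a vertex
inside the triangle `a b v` would be a corner, and no corner, not even `u`, is interior to it.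
-/

open Set Module

theorem IsPreconnected.inter_frontier_nonempty {X : Type*} [TopologicalSpace X] {s t : Set X}
    (hs : IsPreconnected s) (hst : (s ∩ t).Nonempty) (hst' : (s \ t).Nonempty) :
    (s ∩ frontier t).Nonempty := by
  by_contra! h
  have hint : ∀ x ∈ s, x ∈ closure t → x ∈ interior t := fun x hx hxt => by
    by_contra hxi
    exact (h.subset ⟨hx, hxt, hxi⟩).elim
  obtain ⟨x, -, hxi, hxc⟩ := hs (interior t) (closure t)ᶜ isOpen_interior
    isClosed_closure.isOpen_compl
    (fun x hx => (em (x ∈ closure t)).imp (hint x hx) id)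
    (hst.imp fun x hx => ⟨hx.1, hint x hx.1 (subset_closure hx.2)⟩)
    (hst'.imp fun x hx => ⟨hx.1, fun hxt => hx.2 (interior_subset (hint x hx.1 hxt))⟩)
  exact hxc (interior_subset_closure hxi)

theorem Collinear.mem_segment_union {E : Type*} [AddCommGroup E] [Module ℝ E] {x y z p : E}
    (h : Collinear ℝ {x, y, z}) (hp : p ∈ segment ℝ x z) :
    p ∈ segment ℝ x y ∪ segment ℝ y z := by
  simp only [mem_union, mem_segment_iff_wbtw] at hp ⊢
  rcases h.wbtw_or_wbtw_or_wbtw with hy | hz | hx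
  · obtain ⟨s, hs, rfl⟩ := id hp
    obtain ⟨r, hr, rfl⟩ := hy
    simp only [AffineMap.lineMap_apply] at *
    rcases wbtw_or_wbtw_smul_vadd_of_nonneg x (z -ᵥ x) hs.1 hr.1 with h' | h'
    · exact Or.inl h'
    · exact Or.inr (hp.trans_left_right h')
  · exact Or.inl (hz.symm.trans_left hp)
  · exact Or.inr (hx.symm.trans_right hp)

theorem AffineMap.apply_eq_zero_of_mem_segment {E : Type*} [AddCommGroup E] [Module ℝ E]
    (f : E →ᵃ[ℝ] ℝ) {x y p : E} (hx : f x = 0) (hy : f y = 0) (hp : p ∈ segment ℝ x y) :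
    f p = 0 := by
  rw [segment_eq_image_lineMap] at hp
  obtain ⟨t, -, rfl⟩ := hp
  simp [f.apply_lineMap, hx, hy]

theorem AffineBasis.apply_eq_sum_coord_mul {ι k P V : Type*} [Fintype ι] [CommRing k]
    [AddCommGroup V] [Module k V] [AddTorsor V P] (b : AffineBasis ι k P) (f : P →ᵃ[k] k)
    (p : P) : f p = ∑ i, b.coord i p * f (b i) := by
  have hw := b.sum_coord_apply_eq_one p
  conv_lhs => rw [← b.affineCombination_coord_eq_self p]
  rw [Finset.map_affineCombination _ _ _ hw,
    Finset.affineCombination_eq_linear_combination _ _ _ hw]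
  simp [smul_eq_mul]

theorem AffineBasis.mem_segment_of_coord_eq_zero {E : Type*} [AddCommGroup E] [Module ℝ E]
    (b : AffineBasis (Fin 3) ℝ E) {i j k : Fin 3} (hij : i ≠ j) (hik : i ≠ k) (hjk : j ≠ k)
    {p : E} (hi : b.coord i p = 0) (hj : 0 ≤ b.coord j p) (hk : 0 ≤ b.coord k p) :
    p ∈ segment ℝ (b j) (b k) := by
  have hsum := b.sum_coord_apply_eq_one p
  have hp := b.linear_combination_coord_eq_self p
  rw [Fin.sum_univ_three] at hsum hp
  refine ⟨b.coord j p, b.coord k p, hj, hk, ?_, ?_⟩ <;>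
    fin_cases i <;> fin_cases j <;> fin_cases k <;> simp_all <;>
    first | linarith | (rw [add_comm]; exact hp)

theorem exists_forall_affineMap_eq_of_crossing {E : Type*} [AddCommGroup E] [Module ℝ E]
    {a b u v : E} (h : (openSegment ℝ u v ∩ openSegment ℝ a b).Nonempty) :
    ∃ t ∈ Ioo (0 : ℝ) 1, ∃ s ∈ Ioo (0 : ℝ) 1, ∀ f : E →ᵃ[ℝ] ℝ,
      (1 - t) * f u + t * f v = (1 - s) * f a + s * f b := by
  obtain ⟨c, hcuv, hcab⟩ := h
  rw [openSegment_eq_image_lineMap] at hcuv hcab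
  obtain ⟨t, ht, rfl⟩ := hcuv
  obtain ⟨s, hs, hst⟩ := hcab
  refine ⟨t, ht, s, hs, fun f => ?_⟩
  rw [← AffineMap.lineMap_apply_ring, ← AffineMap.lineMap_apply_ring, ← f.apply_lineMap,
    ← f.apply_lineMap, hst]

section Triangle

variable {E : Type*} [NormedAddCommGroup E] [NormedSpace ℝ E] [Fact (finrank ℝ E = 2)]
  {a v b : E}

attribute [local instance] FiniteDimensional.of_fact_finrank_eq_two

noncomputable def triangleBasis (h : ¬Collinear ℝ {a, v, b}) : AffineBasis (Fin 3) ℝ E :=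
  ⟨![a, v, b], affineIndependent_iff_not_collinear_set.2 h, by
    rw [(affineIndependent_iff_not_collinear_set.2 h).affineSpan_eq_top_iff_card_eq_finrank_add_one,
      Fintype.card_fin, Fact.out (p := finrank ℝ E = 2)]⟩

variable (h : ¬Collinear ℝ {a, v, b})

@[simp] theorem triangleBasis_coord_left (i : Fin 3) :
    (triangleBasis h).coord i a = if i = 0 then 1 else 0 :=
  (triangleBasis h).coord_apply i 0

@[simp] theorem triangleBasis_coord_apex (i : Fin 3) :
    (triangleBasis h).coord i v = if i = 1 then 1 else 0 :=
  (triangleBasis h).coord_apply i 1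

@[simp] theorem triangleBasis_coord_right (i : Fin 3) :
    (triangleBasis h).coord i b = if i = 2 then 1 else 0 :=
  (triangleBasis h).coord_apply i 2

theorem triangleBasis_apply_eq (f : E →ᵃ[ℝ] ℝ) (p : E) :
    f p = (triangleBasis h).coord 0 p * f a + (triangleBasis h).coord 1 p * f v +
      (triangleBasis h).coord 2 p * f b := by
  rw [(triangleBasis h).apply_eq_sum_coord_mul f p, Fin.sum_univ_three]
  rfl

theorem range_triangleBasis : range (triangleBasis h) = {a, v, b} := by
  show range ![a, v, b] = _
  simp_rw [Matrix.range_cons, Matrix.range_empty, Set.singleton_union, insert_empty_eq]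

theorem mem_convexHull_triangle_iff {p : E} :
    p ∈ convexHull ℝ {a, v, b} ↔ 0 ≤ (triangleBasis h).coord 0 p ∧
      0 ≤ (triangleBasis h).coord 1 p ∧ 0 ≤ (triangleBasis h).coord 2 p := by
  rw [← range_triangleBasis h, AffineBasis.convexHull_eq_nonneg_coord, mem_ofPred_eq,
    Fin.forall_fin_succ, Fin.forall_fin_two]
  rfl

theorem mem_interior_convexHull_triangle_iff {p : E} :
    p ∈ interior (convexHull ℝ {a, v, b}) ↔ 0 < (triangleBasis h).coord 0 p ∧
      0 < (triangleBasis h).coord 1 p ∧ 0 < (triangleBasis h).coord 2 p := by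
  rw [← range_triangleBasis h, AffineBasis.interior_convexHull, mem_ofPred_eq,
    Fin.forall_fin_succ, Fin.forall_fin_two]
  rfl

end Triangle

section Quadrilateral

variable {E : Type*} [NormedAddCommGroup E] [NormedSpace ℝ E] [Fact (finrank ℝ E = 2)]
  {a v b u : E}

attribute [local instance] FiniteDimensional.of_fact_finrank_eq_two

section

variable (hv : ¬Collinear ℝ {a, v, b}) (hu : ¬Collinear ℝ {a, u, b})

theorem triangleBasis_coord_of_crossing
    (hc : (openSegment ℝ u v ∩ openSegment ℝ a b).Nonempty) :
    0 < (triangleBasis hv).coord 0 u ∧ (triangleBasis hv).coord 1 u < 0 ∧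
      0 < (triangleBasis hv).coord 2 u := by
  obtain ⟨t, ⟨ht₀, ht₁⟩, s, ⟨hs₀, hs₁⟩, hf⟩ :=
    exists_forall_affineMap_eq_of_crossing hc
  have h₀ : (1 - t) * (triangleBasis hv).coord 0 u = 1 - s := by
    simpa using hf ((triangleBasis hv).coord 0)
  have h₁ : (1 - t) * (triangleBasis hv).coord 1 u + t = 0 := by
    simpa using hf ((triangleBasis hv).coord 1)
  have h₂ : (1 - t) * (triangleBasis hv).coord 2 u = s := by
    simpa using hf ((triangleBasis hv).coord 2)
  refine ⟨?_, ?_, ?_⟩ <;> nlinarith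

/-- Coordinate `0` (resp. `2`) of `triangleBasis hv` vanishes on the line `v b` (resp. `a v`), so
this is the intersection of the open half-planes bounded by the four side lines of `a v b u`. -/
def openQuadrilateral : Set E :=
  {p | 0 < (triangleBasis hv).coord 0 p ∧ 0 < (triangleBasis hv).coord 2 p ∧
    0 < (triangleBasis hu).coord 0 p ∧ 0 < (triangleBasis hu).coord 2 p}

theorem isOpen_openQuadrilateral : IsOpen (openQuadrilateral hv hu) := by
  have hcont (b : AffineBasis (Fin 3) ℝ E) (i : Fin 3) : Continuous (b.coord i) :=
    (b.coord i).continuous_of_finiteDimensional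
  exact (isOpen_lt continuous_const (hcont _ 0)).inter <|
    (isOpen_lt continuous_const (hcont _ 2)).inter <|
      (isOpen_lt continuous_const (hcont _ 0)).inter (isOpen_lt continuous_const (hcont _ 2))

theorem openSegment_subset_openQuadrilateral : openSegment ℝ a b ⊆ openQuadrilateral hv hu := by
  rw [openSegment_eq_image_lineMap]
  rintro _ ⟨s, ⟨hs₀, hs₁⟩, rfl⟩
  simp [openQuadrilateral, AffineMap.apply_lineMap, AffineMap.lineMap_apply_ring, hs₀, hs₁]

theorem disjoint_openQuadrilateral_sides :
    Disjoint (openQuadrilateral hv hu)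
      (segment ℝ a v ∪ segment ℝ v b ∪ segment ℝ a u ∪ segment ℝ u b) := by
  rw [Set.disjoint_left]
  rintro p ⟨h₀, h₂, h₀', h₂'⟩ (((hp | hp) | hp) | hp)
  · exact h₂.ne' (AffineMap.apply_eq_zero_of_mem_segment _ (by simp) (by simp) hp)
  · exact h₀.ne' (AffineMap.apply_eq_zero_of_mem_segment _ (by simp) (by simp) hp)
  · exact h₂'.ne' (AffineMap.apply_eq_zero_of_mem_segment _ (by simp) (by simp) hp)
  · exact h₀'.ne' (AffineMap.apply_eq_zero_of_mem_segment _ (by simp) (by simp) hp)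

theorem convexHull_subset_coord_nonneg
    (hc : (openSegment ℝ u v ∩ openSegment ℝ a b).Nonempty) :
    convexHull ℝ {a, v, b, u} ⊆
      {p | 0 ≤ (triangleBasis hv).coord 0 p ∧ 0 ≤ (triangleBasis hv).coord 2 p ∧
        0 ≤ (triangleBasis hu).coord 0 p ∧ 0 ≤ (triangleBasis hu).coord 2 p} := by
  obtain ⟨hu₀, -, hu₂⟩ := triangleBasis_coord_of_crossing hv hc
  obtain ⟨hv₀, -, hv₂⟩ :=
    triangleBasis_coord_of_crossing hu (openSegment_symm ℝ u v ▸ hc)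
  have hIci (f : E →ᵃ[ℝ] ℝ) : Convex ℝ (f ⁻¹' Ici 0) := (convex_Ici 0).affine_preimage f
  refine convexHull_min ?_ <| (hIci _).inter <| (hIci _).inter <| (hIci _).inter (hIci _)
  rintro q (rfl | rfl | rfl | rfl) <;> simp [hu₀.le, hu₂.le, hv₀.le, hv₂.le]

theorem openQuadrilateral_subset_convexHull
    (hc : (openSegment ℝ u v ∩ openSegment ℝ a b).Nonempty) :
    openQuadrilateral hv hu ⊆ convexHull ℝ {a, v, b, u} := by
  rintro p ⟨h₀, h₂, h₀', h₂'⟩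
  rcases le_or_gt 0 ((triangleBasis hv).coord 1 p) with h₁ | h₁
  · exact convexHull_mono (by simp [insert_subset_iff])
      ((mem_convexHull_triangle_iff hv).2 ⟨h₀.le, h₁, h₂.le⟩)
  · have hv₁ := (triangleBasis_coord_of_crossing hu (openSegment_symm ℝ u v ▸ hc)).2.1
    have h₁' : (triangleBasis hu).coord 1 p =
        (triangleBasis hv).coord 1 p * (triangleBasis hu).coord 1 v := by
      simpa using triangleBasis_apply_eq hv ((triangleBasis hu).coord 1) p
    exact convexHull_mono (by simp [insert_subset_iff])
      ((mem_convexHull_triangle_iff hu).2 ⟨h₀'.le, by nlinarith, h₂'.le⟩)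

theorem mem_segment_of_coord_zero_eq_zero
    (hc : (openSegment ℝ u v ∩ openSegment ℝ a b).Nonempty)
    {p : E} (h₀ : (triangleBasis hv).coord 0 p = 0) (h₂ : 0 ≤ (triangleBasis hv).coord 2 p)
    (h₀' : 0 ≤ (triangleBasis hu).coord 0 p) : p ∈ segment ℝ v b := by
  have hv₀ := (triangleBasis_coord_of_crossing hu (openSegment_symm ℝ u v ▸ hc)).1
  have h : (triangleBasis hu).coord 0 p =
      (triangleBasis hv).coord 1 p * (triangleBasis hu).coord 0 v := by
    simpa [h₀] using triangleBasis_apply_eq hv ((triangleBasis hu).coord 0) p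
  exact (triangleBasis hv).mem_segment_of_coord_eq_zero (i := 0) (j := 1) (k := 2) (by decide)
    (by decide) (by decide) h₀ (by nlinarith) h₂

theorem mem_segment_of_coord_two_eq_zero
    (hc : (openSegment ℝ u v ∩ openSegment ℝ a b).Nonempty)
    {p : E} (h₂ : (triangleBasis hv).coord 2 p = 0) (h₀ : 0 ≤ (triangleBasis hv).coord 0 p)
    (h₂' : 0 ≤ (triangleBasis hu).coord 2 p) : p ∈ segment ℝ a v := by
  have hv₂ := (triangleBasis_coord_of_crossing hu (openSegment_symm ℝ u v ▸ hc)).2.2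
  have h : (triangleBasis hu).coord 2 p =
      (triangleBasis hv).coord 1 p * (triangleBasis hu).coord 2 v := by
    simpa [h₂] using triangleBasis_apply_eq hv ((triangleBasis hu).coord 2) p
  exact (triangleBasis hv).mem_segment_of_coord_eq_zero (i := 2) (j := 0) (k := 1) (by decide)
    (by decide) (by decide) h₂ h₀ (by nlinarith)

theorem convexHull_diff_openQuadrilateral_subset
    (hc : (openSegment ℝ u v ∩ openSegment ℝ a b).Nonempty) :
    convexHull ℝ {a, v, b, u} \ openQuadrilateral hv hu ⊆
      segment ℝ a v ∪ segment ℝ v b ∪ segment ℝ a u ∪ segment ℝ u b := by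
  rintro p ⟨hp, hpO⟩
  obtain ⟨h₀, h₂, h₀', h₂'⟩ := convexHull_subset_coord_nonneg hv hu hc hp
  have hc' := openSegment_symm ℝ u v ▸ hc
  simp only [openQuadrilateral, mem_ofPred_eq, not_and_or, not_lt] at hpO
  rcases hpO with h | h | h | h
  · exact Or.inl <| Or.inl <| Or.inr <|
      mem_segment_of_coord_zero_eq_zero hv hu hc (h.antisymm h₀) h₂ h₀'
  · exact Or.inl <| Or.inl <| Or.inl <|
      mem_segment_of_coord_two_eq_zero hv hu hc (h.antisymm h₂) h₀ h₂'
  · exact Or.inr <| mem_segment_of_coord_zero_eq_zero hu hv hc' (h.antisymm h₀') h₂' h₀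
  · exact Or.inl <| Or.inr <|
      mem_segment_of_coord_two_eq_zero hu hv hc' (h.antisymm h₂') h₀' h₂

end

theorem openSegment_subset_interior_convexHull (hv : ¬Collinear ℝ {a, v, b})
    (hu : ¬Collinear ℝ {a, u, b}) (hc : (openSegment ℝ u v ∩ openSegment ℝ a b).Nonempty) :
    openSegment ℝ a b ⊆ interior (convexHull ℝ {a, v, b, u}) :=
  (openSegment_subset_openQuadrilateral hv hu).trans <|
    interior_maximal (openQuadrilateral_subset_convexHull hv hu hc) (isOpen_openQuadrilateral hv hu)

theorem frontier_convexHull_subset_sides (hv : ¬Collinear ℝ {a, v, b})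
    (hu : ¬Collinear ℝ {a, u, b}) (hc : (openSegment ℝ u v ∩ openSegment ℝ a b).Nonempty) :
    frontier (convexHull ℝ {a, v, b, u}) ⊆
      segment ℝ a v ∪ segment ℝ v b ∪ segment ℝ a u ∪ segment ℝ u b := by
  have hQ := ((toFinite ({a, v, b, u} : Set E)).isCompact_convexHull (𝕜 := ℝ)).isClosed
  rw [frontier, hQ.closure_eq]
  exact (sdiff_subset_sdiff_right (interior_maximal (openQuadrilateral_subset_convexHull hv hu hc)
    (isOpen_openQuadrilateral hv hu))).trans (convexHull_diff_openQuadrilateral_subset hv hu hc)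

theorem disjoint_openSegment_sides (hv : ¬Collinear ℝ {a, v, b})
    (hu : ¬Collinear ℝ {a, u, b}) :
    Disjoint (openSegment ℝ a b)
      (segment ℝ a v ∪ segment ℝ v b ∪ segment ℝ a u ∪ segment ℝ u b) :=
  (disjoint_openQuadrilateral_sides hv hu).mono_left (openSegment_subset_openQuadrilateral hv hu)

theorem notMem_interior_convexHull_triangle (hv : ¬Collinear ℝ {a, v, b})
    (hc : (openSegment ℝ u v ∩ openSegment ℝ a b).Nonempty) {p : E}
    (hp : p ∈ ({a, v, b, u} : Set E)) : p ∉ interior (convexHull ℝ {a, b, v}) := by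
  have hu₁ := (triangleBasis_coord_of_crossing hv hc).2.1
  rw [pair_comm b v, mem_interior_convexHull_triangle_iff hv]
  rcases hp with rfl | rfl | rfl | rfl <;> simp [hu₁.not_gt]

end Quadrilateral

instance : Fact (finrank ℝ (ℝ × ℝ) = 2) := ⟨by simp⟩

section PlanarDrawing

variable {V : Type*} {G : SimpleGraph V} {pos : V → ℝ × ℝ}

theorem planarPos_iff_adj : PlanarPos G pos ↔ Function.Injective pos ∧
    ∀ ⦃x y x' y'⦄, G.Adj x y → G.Adj x' y' → s(x, y) ≠ s(x', y') →
      segment ℝ (pos x) (pos y) ∩ segment ℝ (pos x') (pos y') ⊆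
        pos '' {m | m ∈ s(x, y) ∧ m ∈ s(x', y')} := by
  refine and_congr_right fun _ => ⟨fun h x y x' y' hxy hxy' hne => ?_, ?_⟩
  · exact h _ (G.mem_edgeSet.2 hxy) _ (G.mem_edgeSet.2 hxy') hne x y x' y' rfl rfl
  · rintro h e₁ he₁ e₂ he₂ hne x y x' y' rfl rfl
    exact h he₁ he₂ hne

namespace PlanarPos

theorem mem_image (h : PlanarPos G pos) {x y x' y' : V} (hxy : G.Adj x y) (hxy' : G.Adj x' y')
    (hne : s(x, y) ≠ s(x', y')) {z : ℝ × ℝ} (hz : z ∈ segment ℝ (pos x) (pos y))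
    (hz' : z ∈ segment ℝ (pos x') (pos y')) :
    z ∈ pos '' {m | m ∈ s(x, y) ∧ m ∈ s(x', y')} :=
  (planarPos_iff_adj.1 h).2 hxy hxy' hne ⟨hz, hz'⟩

theorem mem_of_pos_mem_segment (h : PlanarPos G pos) {w w' x y : V} (hw : G.Adj w w')
    (hxy : G.Adj x y) (hwxy : pos w ∈ segment ℝ (pos x) (pos y)) : w ∈ s(x, y) := by
  by_cases hne : s(x, y) = s(w, w')
  · rw [hne]
    exact Sym2.mem_mk_left w w'
  · obtain ⟨m, ⟨hm, -⟩, hmw⟩ := h.mem_image hxy hw hne hwxy (left_mem_segment ℝ _ _)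
    rwa [← h.1 hmw]

theorem anti (h : PlanarPos G pos) {H : SimpleGraph V} (hle : H ≤ G) : PlanarPos H pos :=
  planarPos_iff_adj.2
    ⟨h.1, fun _ _ _ _ hxy hxy' => (planarPos_iff_adj.1 h).2 (hle hxy) (hle hxy')⟩

theorem sup_fromEdgeSet (h : PlanarPos G pos) {a b : V}
    (hab : ∀ ⦃x y⦄, G.Adj x y →
      segment ℝ (pos a) (pos b) ∩ segment ℝ (pos x) (pos y) ⊆
        pos '' {m | m ∈ s(a, b) ∧ m ∈ s(x, y)}) :
    PlanarPos (G ⊔ SimpleGraph.fromEdgeSet {s(a, b)}) pos := by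
  have hnew : ∀ ⦃x y x' y'⦄, s(x', y') = s(a, b) → G.Adj x y →
      segment ℝ (pos x') (pos y') ∩ segment ℝ (pos x) (pos y) ⊆
        pos '' {m | m ∈ s(x', y') ∧ m ∈ s(x, y)} := by
    intro x y x' y' he hxy
    have hseg : segment ℝ (pos x') (pos y') = segment ℝ (pos a) (pos b) := by
      rcases Sym2.eq_iff.1 he with ⟨rfl, rfl⟩ | ⟨rfl, rfl⟩
      · rfl
      · exact segment_symm ℝ _ _
    rw [hseg, he]
    exact hab hxy
  refine planarPos_iff_adj.2 ⟨h.1, fun x y x' y' hxy hxy' hne => ?_⟩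
  simp only [SimpleGraph.sup_adj, SimpleGraph.fromEdgeSet_adj, mem_singleton_iff] at hxy hxy'
  rcases hxy with hxy | ⟨hxy, -⟩ <;> rcases hxy' with hxy' | ⟨hxy', -⟩
  · exact (planarPos_iff_adj.1 h).2 hxy hxy' hne
  · rw [inter_comm]
    simpa only [and_comm] using hnew hxy' hxy
  · exact hnew hxy hxy'
  · exact absurd (hxy.trans hxy'.symm) hne

theorem not_collinear (h : PlanarPos G pos) {a v b u : V} (hav : G.Adj a v) (hvb : G.Adj v b)
    (huv : G.Adj u v) (hau : a ≠ u) (hbu : b ≠ u)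
    (hc : (openSegment ℝ (pos u) (pos v) ∩ openSegment ℝ (pos a) (pos b)).Nonempty) :
    ¬Collinear ℝ {pos a, pos v, pos b} := by
  intro hcol
  obtain ⟨c, hcuv, hcab⟩ := hc
  have hedge : ∀ w, G.Adj w v → w ≠ u → c ∉ segment ℝ (pos w) (pos v) := by
    intro w hwv hwu hcw
    have hne : s(w, v) ≠ s(u, v) := by simp [hwu, huv.ne.symm]
    obtain ⟨m, ⟨hmw, hmu⟩, rfl⟩ :=
      h.mem_image hwv huv hne hcw (openSegment_subset_segment ℝ _ _ hcuv)
    rcases Sym2.mem_iff.1 hmu with rfl | rfl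
    · rcases Sym2.mem_iff.1 hmw with rfl | rfl
      · exact hwu rfl
      · exact huv.ne rfl
    · exact huv.ne (h.1 (right_mem_openSegment_iff.1 hcuv))
  rcases hcol.mem_segment_union (openSegment_subset_segment ℝ _ _ hcab) with hc | hc
  · exact hedge a hav hau hc
  · exact hedge b hvb.symm hbu (segment_symm ℝ (pos v) (pos b) ▸ hc)

theorem disjoint_openSegment_segment (h : PlanarPos G pos) {a v b u : V}
    (hav : G.Adj a v) (hvb : G.Adj v b) (hau : G.Adj a u) (hub : G.Adj u b) (hab : ¬G.Adj a b)
    (hv : ¬Collinear ℝ {pos a, pos v, pos b}) (hu : ¬Collinear ℝ {pos a, pos u, pos b})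
    (hc : (openSegment ℝ (pos u) (pos v) ∩ openSegment ℝ (pos a) (pos b)).Nonempty)
    (hempty : ∀ x : V, pos x ∈ convexHull ℝ {pos a, pos v, pos b, pos u} →
      x ∈ ({a, v, b, u} : Set V))
    {x y : V} (hxy : G.Adj x y) (hne : s(x, y) ≠ s(u, v)) :
    Disjoint (openSegment ℝ (pos a) (pos b)) (segment ℝ (pos x) (pos y)) := by
  rw [Set.disjoint_left]
  intro z hzab hzxy
  have hzQ := openSegment_subset_interior_convexHull hv hu hc hzab
  wlog hx : x ∉ ({a, v, b, u} : Set V) generalizing x y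
  · by_cases hy : y ∈ ({a, v, b, u} : Set V)
    -- an edge between two corners is a side, `u v`, or the non-edge `a b`
    · have hsides := Set.disjoint_left.1 (disjoint_openSegment_sides hv hu) hzab
      rcases not_not.1 hx with rfl | rfl | rfl | rfl <;> rcases hy with rfl | rfl | rfl | rfl <;>
        simp_all [segment_symm, SimpleGraph.adj_comm]
    · exact this hxy.symm (by rwa [Sym2.eq_swap]) (segment_symm ℝ (pos x) (pos y) ▸ hzxy) hy
  obtain ⟨p, hpzx, hpQ⟩ := (convex_segment z (pos x)).isPreconnected.inter_frontier_nonempty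
    ⟨z, left_mem_segment ℝ _ _, interior_subset hzQ⟩
    ⟨pos x, right_mem_segment ℝ _ _, fun hxQ => hx (hempty x hxQ)⟩
  have hpxy : p ∈ segment ℝ (pos x) (pos y) :=
    (convex_segment _ _).segment_subset hzxy (left_mem_segment ℝ _ _)
      (segment_symm ℝ z (pos x) ▸ hpzx)
  -- `p` lies on a side, so it is a common vertex of that side and `x y`, which cannot be `x`
  have hyp : pos y = p := by
    have hside : ∀ c d, G.Adj c d → c ∈ ({a, v, b, u} : Set V) →
        d ∈ ({a, v, b, u} : Set V) → p ∈ segment ℝ (pos c) (pos d) → pos y = p := by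
      intro c d hcd hc hd hpcd
      have hne' : s(x, y) ≠ s(c, d) := by
        rintro he
        rcases Sym2.eq_iff.1 he with ⟨rfl, -⟩ | ⟨rfl, -⟩ <;> contradiction
      obtain ⟨m, ⟨hmxy, hmcd⟩, rfl⟩ := h.mem_image hxy hcd hne' hpxy hpcd
      rcases Sym2.mem_iff.1 hmxy with rfl | rfl
      · rcases Sym2.mem_iff.1 hmcd with rfl | rfl <;> contradiction
      · rfl
    rcases frontier_convexHull_subset_sides hv hu hc hpQ with ((hp | hp) | hp) | hp
    · exact hside a v hav (by simp) (by simp) hp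
    · exact hside v b hvb (by simp) (by simp) hp
    · exact hside a u hau (by simp) (by simp) hp
    · exact hside u b hub (by simp) (by simp) hp
  have hzy : z = pos y := (wbtw_swap_right_iff ℝ (pos x)).1
    ⟨mem_segment_iff_wbtw.1 hzxy,
      mem_segment_iff_wbtw.1 (hyp ▸ segment_symm ℝ z (pos x) ▸ hpzx)⟩
  exact hpQ.2 (hyp ▸ hzy ▸ hzQ)

theorem segment_inter_segment_subset (h : PlanarPos G pos) {a v b u : V}
    (hav : G.Adj a v) (hvb : G.Adj v b) (hau : G.Adj a u) (hub : G.Adj u b) (hab : ¬G.Adj a b)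
    (hv : ¬Collinear ℝ {pos a, pos v, pos b}) (hu : ¬Collinear ℝ {pos a, pos u, pos b})
    (hc : (openSegment ℝ (pos u) (pos v) ∩ openSegment ℝ (pos a) (pos b)).Nonempty)
    (hempty : ∀ x : V, pos x ∈ convexHull ℝ {pos a, pos v, pos b, pos u} →
      x ∈ ({a, v, b, u} : Set V))
    {x y : V} (hxy : G.Adj x y) (hne : s(x, y) ≠ s(u, v)) :
    segment ℝ (pos a) (pos b) ∩ segment ℝ (pos x) (pos y) ⊆
      pos '' {m | m ∈ s(a, b) ∧ m ∈ s(x, y)} := by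
  rintro z ⟨hzab, hzxy⟩
  rw [← insert_endpoints_openSegment] at hzab
  rcases hzab with rfl | rfl | hz
  · exact ⟨a, ⟨Sym2.mem_mk_left a b, h.mem_of_pos_mem_segment hav hxy hzxy⟩, rfl⟩
  · exact ⟨b, ⟨Sym2.mem_mk_right a b, h.mem_of_pos_mem_segment hvb.symm hxy hzxy⟩, rfl⟩
  · exact absurd hzxy (Set.disjoint_left.1
      (h.disjoint_openSegment_segment hav hvb hau hub hab hv hu hc hempty hxy hne) hz)

end PlanarPos

end PlanarDrawing

/-- Let `a, v, b, u` form a convex quadrilateral (in this cyclic order, so that the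
diagonals `(u,v)` and `(a,b)` cross) in a planar straight-line drawing of `G`, with no
other vertex of `G` inside the quadrilateral.  If `G` contains the edges `(a,v)`,
`(v,b)`, `(a,u)`, `(u,b)`, `(u,v)` but not `(a,b)`, then removing edge `(u,v)` and
adding the straight-line segment `(a,b)` yields a planar straight-line drawing, and
the triangle `a, b, v` contains no vertex of the graph in its interior. -/
theorem swap_diagonal_in_empty_convex_quadrilateral
    {V : Type*} (G : SimpleGraph V) (pos : V → ℝ × ℝ)
    (hplanar : PlanarPos G pos)
    (a b v u : V)
    (hav : G.Adj a v) (hvb : G.Adj v b) (hau : G.Adj a u) (hub : G.Adj u b)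
    (huv : G.Adj u v) (hab : ¬G.Adj a b)
    (hconvex : (openSegment ℝ (pos u) (pos v) ∩ openSegment ℝ (pos a) (pos b)).Nonempty)
    (hempty : ∀ x : V,
      pos x ∈ convexHull ℝ ({pos a, pos v, pos b, pos u} : Set (ℝ × ℝ)) →
        x ∈ ({a, v, b, u} : Set V)) :
    PlanarPos ((G.deleteEdges {s(u, v)}) ⊔ SimpleGraph.fromEdgeSet {s(a, b)}) pos ∧
      ∀ x : V, pos x ∉ interior (convexHull ℝ ({pos a, pos b, pos v} : Set (ℝ × ℝ))) := by
  have hv := hplanar.not_collinear hav hvb huv hau.ne hub.ne.symm hconvex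
  have hu := hplanar.not_collinear hau hub huv.symm hav.ne hvb.ne.symm
    (openSegment_symm ℝ (pos u) (pos v) ▸ hconvex)
  refine ⟨(hplanar.anti (G.deleteEdges_le _)).sup_fromEdgeSet fun x y hxy => ?_, fun x hx => ?_⟩
  · rw [SimpleGraph.deleteEdges_adj] at hxy
    exact hplanar.segment_inter_segment_subset hav hvb hau hub hab hv hu hconvex hempty hxy.1 hxy.2
  · have hxQ := hempty x (convexHull_mono (by simp [insert_subset_iff]) (interior_subset hx))
    refine notMem_interior_convexHull_triangle hv hconvex ?_ hx
    rcases hxQ with rfl | rfl | rfl | rfl <;> simp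
end
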